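/- arXiv:2202.10072 — 10 statements merged into one kernel-verified Lean document; each statement's English description precedes it below -/
import Mathlib

section
/- The Attacker-Defender game with endowments R_A and R_D (integers, R_A ≥ 2, R_D ≥ 2) has no pure-strategy Nash equilibrium: there is no pair (i,j) with i ∈ {0,...,R_A}, j ∈ {0,...,R_D} such that π_A(i,j) ≥ π_A(i',j) for all i' ∈ {0,...,R_A} and π_D(i,j) ≥ π_D(i,j') for all j' ∈ {0,...,R_D}. -/
/-- Attacker's payoff: `R_A - i + R_D - j` if `i > j`, else `R_A - i`. -/
noncomputable def piA (RA RD i j : ℕ) : ℝ :=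
  if j < i then (RA : ℝ) - i + ((RD : ℝ) - j) else (RA : ℝ) - i

/-- Defender's payoff: `0` if `i > j`, else `R_D - j`. -/
noncomputable def piD (RD i j : ℕ) : ℝ :=
  if j < i then 0 else (RD : ℝ) - j

/-- The A-D game with endowments `R_A, R_D ≥ 2` has no pure-strategy Nash equilibrium. -/
theorem no_pure_strategy_equilibrium (RA RD : ℕ) (hA : 2 ≤ RA) (hD : 2 ≤ RD) :
    ¬ ∃ i j : ℕ, i ≤ RA ∧ j ≤ RD ∧
      (∀ i', i' ≤ RA → piA RA RD i' j ≤ piA RA RD i j) ∧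
      (∀ j', j' ≤ RD → piD RD i j' ≤ piD RD i j) := by
  rintro ⟨i, j, hi, hj, hAopt, hDopt⟩
  rcases le_or_gt i j with hij | hij
  · -- case i ≤ j : no attack succeeds
    -- defender deviation to j' = i forces j = i
    have h1 := hDopt i (hij.trans hj)
    rw [piD, piD, if_neg (lt_irrefl i), if_neg (not_lt.mpr hij)] at h1
    have hji : (j : ℝ) ≤ i := by linarith
    have hijeq : i = j := le_antisymm hij (by exact_mod_cast hji)
    subst hijeq
    -- attacker deviation to 0 forces i = 0
    have h2 := hAopt 0 (by omega)
    rw [piA, piA, if_neg (by omega), if_neg (lt_irrefl i)] at h2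
    have hi0 : (i : ℝ) ≤ 0 := by push_cast at h2 ⊢; linarith
    have hi0' : i = 0 := by exact_mod_cast le_antisymm hi0 (Nat.cast_nonneg i)
    subst hi0'
    -- attacker deviation to 1 is profitable
    have h3 := hAopt 1 (by omega)
    rw [piA, piA, if_pos (by omega), if_neg (lt_irrefl 0)] at h3
    have : (2 : ℝ) ≤ RD := by exact_mod_cast hD
    push_cast at h3
    linarith
  · -- case j < i : attack succeeds
    -- attacker deviation to j+1 forces i = j+1
    have h4 := hAopt (j + 1) (by omega)
    rw [piA, piA, if_pos (Nat.lt_succ_self j), if_pos hij] at h4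
    have : (i : ℝ) ≤ j + 1 := by push_cast at h4; linarith
    have hi1 : i = j + 1 := le_antisymm (by exact_mod_cast this) hij
    subst hi1
    -- attacker deviation to 0 gives RD ≥ 2j + 1
    have h5 := hAopt 0 (by omega)
    rw [piA, piA, if_neg (by omega), if_pos hij] at h5
    have hRD : (2 * j + 1 : ℝ) ≤ RD := by push_cast at h5 ⊢; linarith
    have hRD' : 2 * j + 1 ≤ RD := by exact_mod_cast hRD
    have hj2 : j + 2 ≤ RD := by omega
    -- defender deviation to j+1 is profitable
    have h6 := hDopt (j + 1) (by omega)
    rw [piD, piD, if_neg (lt_irrefl (j + 1)), if_pos hij] at h6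
    have : (j + 2 : ℝ) ≤ RD := by exact_mod_cast hj2
    push_cast at h6
    linarith
end

section
/- In any mixed-strategy Nash equilibrium (a,d) of the Attacker-Defender game with endowments R_A and R_D, the supports of the equilibrium strategies coincide or differ by exactly one element: either supp(a) = supp(d), or supp(a) = supp(d) ∪ {l+1} where l = max supp(d). -/
/-- A mixed strategy over the investments `{0, 1, ..., R}`. -/
def IsMixed (R : ℕ) (s : ℕ → ℝ) : Prop :=
  (∀ i, 0 ≤ s i) ∧ (∀ i, R < i → s i = 0) ∧ ∑ i ∈ Finset.range (R + 1), s i = 1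

/-- Attacker's expected payoff under mixed strategies. -/
noncomputable def PayA (RA RD : ℕ) (a d : ℕ → ℝ) : ℝ :=
  ∑ i ∈ Finset.range (RA + 1), ∑ j ∈ Finset.range (RD + 1), a i * d j * piA RA RD i j

/-- Defender's expected payoff under mixed strategies. -/
noncomputable def PayD (RA RD : ℕ) (a d : ℕ → ℝ) : ℝ :=
  ∑ i ∈ Finset.range (RA + 1), ∑ j ∈ Finset.range (RD + 1), a i * d j * piD RD i j

/-- Mixed-strategy Nash equilibrium of the A-D game with endowments `RA`, `RD`. -/
def IsNash (RA RD : ℕ) (a d : ℕ → ℝ) : Prop :=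
  IsMixed RA a ∧ IsMixed RD d ∧
  (∀ a', IsMixed RA a' → PayA RA RD a' d ≤ PayA RA RD a d) ∧
  (∀ d', IsMixed RD d' → PayD RA RD a d' ≤ PayD RA RD a d)

/-! ### Auxiliary definitions -/

/-- Attacker's expected payoff from the pure strategy `i` against `d`. -/
noncomputable def fA (RA RD : ℕ) (d : ℕ → ℝ) (i : ℕ) : ℝ :=
  ∑ j ∈ Finset.range (RD + 1), d j * piA RA RD i j

/-- Defender's expected payoff from the pure strategy `j` against `a`. -/
noncomputable def gD (RA RD : ℕ) (a : ℕ → ℝ) (j : ℕ) : ℝ :=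
  ∑ i ∈ Finset.range (RA + 1), a i * piD RD i j

/-- Cumulative distribution of `a`. -/
noncomputable def CumA (a : ℕ → ℝ) (j : ℕ) : ℝ :=
  ∑ i ∈ Finset.range (j + 1), a i

lemma piA_eq (RA RD i j : ℕ) :
    piA RA RD i j = ((RA:ℝ) - i) + (if j < i then ((RD:ℝ) - j) else 0) := by
  unfold piA; split <;> ring

lemma PayA_eq (RA RD : ℕ) (a d : ℕ → ℝ) :
    PayA RA RD a d = ∑ i ∈ Finset.range (RA+1), a i * fA RA RD d i := by
  unfold PayA fA
  exact Finset.sum_congr rfl fun i _ => by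
    rw [Finset.mul_sum]
    exact Finset.sum_congr rfl fun j _ => by ring

lemma PayD_eq (RA RD : ℕ) (a d : ℕ → ℝ) :
    PayD RA RD a d = ∑ j ∈ Finset.range (RD+1), d j * gD RA RD a j := by
  unfold PayD gD
  rw [Finset.sum_comm]
  exact Finset.sum_congr rfl fun j _ => by
    rw [Finset.mul_sum]
    exact Finset.sum_congr rfl fun i _ => by ring

lemma isMixed_pure (R i : ℕ) (hi : i ≤ R) :
    IsMixed R (fun k => if k = i then 1 else 0) := by
  refine ⟨fun k => by dsimp; split <;> norm_num,
    fun k hk => by dsimp; rw [if_neg (by omega)], ?_⟩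
  rw [Finset.sum_ite_eq' (Finset.range (R+1)) i (fun _ => (1:ℝ))]
  rw [if_pos (Finset.mem_range.2 (by omega))]

lemma PayA_pure (RA RD : ℕ) (d : ℕ → ℝ) (i : ℕ) (hi : i ≤ RA) :
    PayA RA RD (fun k => if k = i then 1 else 0) d = fA RA RD d i := by
  rw [PayA_eq]
  have : ∀ k ∈ Finset.range (RA+1),
      (if k = i then (1:ℝ) else 0) * fA RA RD d k
        = (if k = i then fA RA RD d k else 0) := by
    intro k _; split <;> simp
  rw [Finset.sum_congr rfl this,
    Finset.sum_ite_eq' (Finset.range (RA+1)) i (fA RA RD d),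
    if_pos (Finset.mem_range.2 (by omega))]

lemma PayD_pure (RA RD : ℕ) (a : ℕ → ℝ) (j : ℕ) (hj : j ≤ RD) :
    PayD RA RD a (fun k => if k = j then 1 else 0) = gD RA RD a j := by
  rw [PayD_eq]
  have : ∀ k ∈ Finset.range (RD+1),
      (if k = j then (1:ℝ) else 0) * gD RA RD a k
        = (if k = j then gD RA RD a k else 0) := by
    intro k _; split <;> simp
  rw [Finset.sum_congr rfl this,
    Finset.sum_ite_eq' (Finset.range (RD+1)) j (gD RA RD a),
    if_pos (Finset.mem_range.2 (by omega))]

lemma fA_eq (RA RD : ℕ) (d : ℕ → ℝ) (hd : IsMixed RD d) (i : ℕ) :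
    fA RA RD d i = ((RA:ℝ) - i)
      + ∑ j ∈ Finset.range (RD+1), (if j < i then d j * ((RD:ℝ) - j) else 0) := by
  unfold fA
  rw [Finset.sum_congr rfl (fun j _ => by
    rw [piA_eq, mul_add, mul_ite, mul_zero, mul_comm])]
  rw [Finset.sum_add_distrib, ← Finset.mul_sum]
  have := hd.2.2
  rw [mul_comm] at *
  rw [this, one_mul]

lemma fA_succ (RA RD : ℕ) (d : ℕ → ℝ) (hd : IsMixed RD d) (i : ℕ) :
    fA RA RD d (i+1) = fA RA RD d i - 1 + d i * ((RD:ℝ) - i) := by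
  rw [fA_eq RA RD d hd, fA_eq RA RD d hd]
  have h1 : ∑ j ∈ Finset.range (RD+1), (if j < i+1 then d j * ((RD:ℝ) - j) else 0)
      = (∑ j ∈ Finset.range (RD+1), (if j < i then d j * ((RD:ℝ) - j) else 0))
        + ∑ j ∈ Finset.range (RD+1), (if j = i then d j * ((RD:ℝ) - j) else 0) := by
    rw [← Finset.sum_add_distrib]
    refine Finset.sum_congr rfl fun j _ => ?_
    by_cases h1 : j < i
    · rw [if_pos (by omega), if_pos h1, if_neg (by omega), add_zero]
    by_cases h2 : j = i
    · rw [if_pos (by omega), if_neg h1, if_pos h2, zero_add]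
    · rw [if_neg (by omega), if_neg h1, if_neg h2, add_zero]
  have h2 : ∑ j ∈ Finset.range (RD+1), (if j = i then d j * ((RD:ℝ) - j) else 0)
      = d i * ((RD:ℝ) - i) := by
    rw [Finset.sum_ite_eq' (Finset.range (RD+1)) i (fun j => d j * ((RD:ℝ) - j))]
    split
    · rfl
    · rw [hd.2.1 i (by simp only [Finset.mem_range] at *; omega), zero_mul]
  rw [h1, h2]
  push_cast
  ring

lemma fA_zero (RA RD : ℕ) (d : ℕ → ℝ) (hd : IsMixed RD d) :
    fA RA RD d 0 = (RA:ℝ) := by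
  rw [fA_eq RA RD d hd]
  simp

lemma gD_eq (RA RD : ℕ) (a : ℕ → ℝ) (ha : IsMixed RA a) (j : ℕ) :
    gD RA RD a j = ((RD:ℝ) - j) * CumA a j := by
  unfold gD CumA
  have hpt : ∀ i, a i * piD RD i j = if i < j + 1 then a i * ((RD:ℝ) - j) else 0 := by
    intro i; unfold piD
    by_cases h : j < i
    · rw [if_pos h, if_neg (by omega), mul_zero]
    · rw [if_neg h, if_pos (by omega)]
  rw [Finset.sum_congr rfl (fun i _ => hpt i)]
  rw [Finset.mul_sum]
  have key : ∀ N, ∑ i ∈ Finset.range N, (if i < j + 1 then a i * ((RD:ℝ) - j) else 0)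
      = ∑ i ∈ Finset.range (min N (j+1)), a i * ((RD:ℝ) - j) := by
    intro N
    rw [← Finset.sum_filter]
    congr 1
    ext x
    simp only [Finset.mem_filter, Finset.mem_range, Finset.mem_range, lt_min_iff]
  rw [key]
  rcases le_or_gt (j+1) (RA+1) with h | h
  · rw [min_eq_right h]
    exact Finset.sum_congr rfl fun i _ => by ring
  · rw [min_eq_left h.le]
    rw [show ∑ i ∈ Finset.range (j+1), ((RD:ℝ) - j) * a i
        = ∑ i ∈ Finset.range (RA+1), ((RD:ℝ) - j) * a i from
      (Finset.sum_subset (Finset.range_subset_range.2 (by omega)) (fun x _ hx => by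
        rw [ha.2.1 x (by simp only [Finset.mem_range] at hx ⊢; omega), mul_zero])).symm]
    exact Finset.sum_congr rfl fun i _ => by ring

lemma CumA_succ (a : ℕ → ℝ) (j : ℕ) : CumA a (j+1) = CumA a j + a (j+1) := by
  unfold CumA; rw [Finset.sum_range_succ]

lemma CumA_nonneg (a : ℕ → ℝ) (ha : ∀ i, 0 ≤ a i) (j : ℕ) : 0 ≤ CumA a j :=
  Finset.sum_nonneg fun i _ => ha i

lemma CumA_pos (a : ℕ → ℝ) (ha : ∀ i, 0 ≤ a i) {i j : ℕ} (hij : i ≤ j) (hi : 0 < a i) :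
    0 < CumA a j :=
  lt_of_lt_of_le hi (Finset.single_le_sum (fun k _ => ha k)
    (Finset.mem_range.2 (by omega)))

lemma CumA_eq_zero (a : ℕ → ℝ) (ha : ∀ i, 0 ≤ a i) {j : ℕ} (h : CumA a j = 0) :
    ∀ i ≤ j, a i = 0 := fun i hi =>
  (Finset.sum_eq_zero_iff_of_nonneg (fun k _ => ha k)).1 h i (Finset.mem_range.2 (by omega))

lemma attacker_opt (RA RD : ℕ) (a d : ℕ → ℝ) (h : IsNash RA RD a d) :
    (∀ i, i ≤ RA → fA RA RD d i ≤ PayA RA RD a d) ∧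
    (∀ i, 0 < a i → fA RA RD d i = PayA RA RD a d) := by
  obtain ⟨ha, hd, hBA, _⟩ := h
  have hle : ∀ i, i ≤ RA → fA RA RD d i ≤ PayA RA RD a d := by
    intro i hi
    have := hBA (fun k => if k = i then 1 else 0) (isMixed_pure RA i hi)
    rwa [PayA_pure RA RD d i hi] at this
  refine ⟨hle, ?_⟩
  intro i hai
  have hiRA : i ≤ RA := by
    by_contra h'
    have := ha.2.1 i (by omega)
    linarith
  by_contra hne
  have hlt : fA RA RD d i < PayA RA RD a d := lt_of_le_of_ne (hle i hiRA) hne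
  have hsum : ∑ k ∈ Finset.range (RA+1),
      a k * (PayA RA RD a d - fA RA RD d k) = 0 := by
    have : ∀ k ∈ Finset.range (RA+1),
        a k * (PayA RA RD a d - fA RA RD d k)
          = a k * PayA RA RD a d - a k * fA RA RD d k := fun k _ => by ring
    rw [Finset.sum_congr rfl this, Finset.sum_sub_distrib, ← Finset.sum_mul,
      ha.2.2, one_mul, ← PayA_eq, sub_self]
  have hnn : ∀ k ∈ Finset.range (RA+1),
      0 ≤ a k * (PayA RA RD a d - fA RA RD d k) := by
    intro k hk
    exact mul_nonneg (ha.1 k)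
      (sub_nonneg.2 (hle k (by simpa [Nat.lt_succ_iff] using hk)))
  have := (Finset.sum_eq_zero_iff_of_nonneg hnn).1 hsum i
    (Finset.mem_range.2 (by omega))
  nlinarith

lemma defender_opt (RA RD : ℕ) (a d : ℕ → ℝ) (h : IsNash RA RD a d) :
    (∀ j, j ≤ RD → gD RA RD a j ≤ PayD RA RD a d) ∧
    (∀ j, 0 < d j → gD RA RD a j = PayD RA RD a d) := by
  obtain ⟨ha, hd, _, hBD⟩ := h
  have hle : ∀ j, j ≤ RD → gD RA RD a j ≤ PayD RA RD a d := by
    intro j hj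
    have := hBD (fun k => if k = j then 1 else 0) (isMixed_pure RD j hj)
    rwa [PayD_pure RA RD a j hj] at this
  refine ⟨hle, ?_⟩
  intro j haj
  have hjRD : j ≤ RD := by
    by_contra h'
    have := hd.2.1 j (by omega)
    linarith
  by_contra hne
  have hlt : gD RA RD a j < PayD RA RD a d := lt_of_le_of_ne (hle j hjRD) hne
  have hsum : ∑ k ∈ Finset.range (RD+1),
      d k * (PayD RA RD a d - gD RA RD a k) = 0 := by
    have : ∀ k ∈ Finset.range (RD+1),
        d k * (PayD RA RD a d - gD RA RD a k)
          = d k * PayD RA RD a d - d k * gD RA RD a k := fun k _ => by ring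
    rw [Finset.sum_congr rfl this, Finset.sum_sub_distrib, ← Finset.sum_mul,
      hd.2.2, one_mul, ← PayD_eq, sub_self]
  have hnn : ∀ k ∈ Finset.range (RD+1),
      0 ≤ d k * (PayD RA RD a d - gD RA RD a k) := by
    intro k hk
    exact mul_nonneg (hd.1 k)
      (sub_nonneg.2 (hle k (by simpa [Nat.lt_succ_iff] using hk)))
  have := (Finset.sum_eq_zero_iff_of_nonneg hnn).1 hsum j
    (Finset.mem_range.2 (by omega))
  nlinarith

/-- In any mixed equilibrium, the supports coincide or differ by the single element
`l + 1`, where `l = max supp(d)`. -/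
theorem supports_coincide_or_differ_by_one (RA RD : ℕ) (hA : 2 ≤ RA) (hD : 2 ≤ RD)
    (a d : ℕ → ℝ) (h : IsNash RA RD a d) :
    {i : ℕ | 0 < a i} = {j : ℕ | 0 < d j} ∨
    {i : ℕ | 0 < a i} = {j : ℕ | 0 < d j} ∪ {sSup {j : ℕ | 0 < d j} + 1} := by
  obtain ⟨hfle, hfeq⟩ := attacker_opt RA RD a d h
  obtain ⟨hgle, hgeq⟩ := defender_opt RA RD a d h
  obtain ⟨ha, hd, -, -⟩ := h
  have ha0 : ∀ i, 0 < a i → i ≤ RA := by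
    intro i hi; by_contra h'; have := ha.2.1 i (by omega); linarith
  have hd0 : ∀ j, 0 < d j → j ≤ RD := by
    intro j hj; by_contra h'; have := hd.2.1 j (by omega); linarith
  -- Fact A : the attacker only plays i+1 if the defender plays i with enough weight
  have factA : ∀ i, 0 < a (i+1) → 1 ≤ d i * ((RD:ℝ) - i) ∧ 0 < d i ∧ i + 1 ≤ RD := by
    intro i hi
    have hiRA : i + 1 ≤ RA := ha0 _ hi
    have h1 : fA RA RD d i ≤ PayA RA RD a d := hfle i (by omega)
    have h2 : fA RA RD d (i+1) = PayA RA RD a d := hfeq _ hi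
    have h3 := fA_succ RA RD d hd i
    have hge : 1 ≤ d i * ((RD:ℝ) - i) := by linarith
    have hdipos : 0 < d i := by
      rcases lt_or_eq_of_le (hd.1 i) with h' | h'
      · exact h'
      · rw [← h', zero_mul] at hge; linarith
    have hiRD : i ≤ RD := hd0 i hdipos
    refine ⟨hge, hdipos, ?_⟩
    by_contra hc
    have hieq : i = RD := by omega
    rw [hieq, sub_self, mul_zero] at hge
    linarith
  -- supports are nonempty
  have hdne : ∃ j, 0 < d j := by
    by_contra hc; push_neg at hc
    have hz : ∀ j, d j = 0 := fun j => le_antisymm (hc j) (hd.1 j)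
    have := hd.2.2
    rw [Finset.sum_eq_zero (fun j _ => hz j)] at this
    norm_num at this
  have hane : ∃ i, 0 < a i := by
    by_contra hc; push_neg at hc
    have hz : ∀ i, a i = 0 := fun i => le_antisymm (hc i) (ha.1 i)
    have := ha.2.2
    rw [Finset.sum_eq_zero (fun i _ => hz i)] at this
    norm_num at this
  -- The defender's equilibrium payoff is positive
  have hNpos : 0 < PayD RA RD a d := by
    by_contra hc
    push_neg at hc
    have hz : ∀ i, i < RD → a i = 0 := by
      intro i hi
      have hg : gD RA RD a (RD - 1) ≤ PayD RA RD a d := hgle (RD-1) (by omega)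
      rw [gD_eq RA RD a ha] at hg
      have hcast : ((RD:ℝ) - ((RD-1:ℕ):ℝ)) = 1 := by
        push_cast [Nat.cast_sub (by omega : 1 ≤ RD)]; ring
      rw [hcast, one_mul] at hg
      have hC0 : CumA a (RD - 1) = 0 :=
        le_antisymm (by linarith) (CumA_nonneg a ha.1 _)
      exact CumA_eq_zero a ha.1 hC0 i (by omega)
    obtain ⟨i, hi⟩ := hane
    have hiRD : RD ≤ i := by
      by_contra h'
      have := hz i (by omega); linarith
    obtain ⟨m, rfl⟩ : ∃ m, i = m + 1 := ⟨i-1, by omega⟩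
    obtain ⟨hge, hdm, hmRD⟩ := factA m hi
    have hmeq : m + 1 = RD := by omega
    have hcast : ((RD:ℝ) - (m:ℝ)) = 1 := by
      rw [← hmeq]; push_cast; ring
    rw [hcast, mul_one] at hge
    -- d m ≤ 1
    have hdm1 : d m ≤ 1 := by
      rw [← hd.2.2]
      exact Finset.single_le_sum (fun k _ => hd.1 k) (Finset.mem_range.2 (by omega))
    -- every d j with j < m is zero : otherwise total mass exceeds 1
    have hdothers : ∀ j, j < m → d j = 0 := by
      intro j hjm
      by_contra hc2
      have hdj : 0 < d j := lt_of_le_of_ne (hd.1 j) (Ne.symm hc2)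
      have hjRD : j ≤ RD := hd0 j hdj
      have hsub : ({j, m} : Finset ℕ) ⊆ Finset.range (RD+1) := by
        intro x hx
        simp only [Finset.mem_insert, Finset.mem_singleton] at hx
        rcases hx with rfl | rfl <;> exact Finset.mem_range.2 (by omega)
      have hsum2 := Finset.sum_le_sum_of_subset_of_nonneg hsub
        (fun k _ _ => hd.1 k)
      rw [Finset.sum_pair (by omega : j ≠ m), hd.2.2] at hsum2
      linarith
    -- now compute fA m and derive the contradiction with fA 0 = RA
    have hfAm : fA RA RD d m = (RA:ℝ) - m := by
      rw [fA_eq RA RD d hd]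
      rw [Finset.sum_eq_zero, add_zero]
      intro j _
      by_cases hj : j < m
      · rw [if_pos hj, hdothers j hj, zero_mul]
      · rw [if_neg hj]
    have hfsucc := fA_succ RA RD d hd m
    rw [hcast, mul_one, hfAm] at hfsucc
    have hM := hfeq (m+1) hi
    have h0 : fA RA RD d 0 ≤ PayA RA RD a d := hfle 0 (by omega)
    rw [fA_zero RA RD d hd] at h0
    have hm1 : (1:ℝ) ≤ (m:ℝ) := by
      have : 1 ≤ m := by omega
      exact_mod_cast this
    linarith
  -- every pure strategy in the defender's support satisfies:
  have hsuppd : ∀ j, 0 < d j → 0 < CumA a j ∧ j < RD := by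
    intro j hj
    have hgj := hgeq j hj
    rw [gD_eq RA RD a ha] at hgj
    have hjRD : j ≤ RD := hd0 j hj
    have hCnn := CumA_nonneg a ha.1 j
    have hjlt : j < RD := by
      by_contra hc
      have : j = RD := by omega
      rw [this, sub_self, zero_mul] at hgj
      linarith
    refine ⟨?_, hjlt⟩
    have hpos : (0:ℝ) < (RD:ℝ) - j := by
      have : (j:ℝ) < (RD:ℝ) := by exact_mod_cast hjlt
      linarith
    nlinarith
  -- Fact C : supp d ⊆ supp a
  have hsubDA : ∀ j, 0 < d j → 0 < a j := by
    intro j hj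
    obtain ⟨hCj, hjlt⟩ := hsuppd j hj
    have hgj := hgeq j hj
    rw [gD_eq RA RD a ha] at hgj
    cases j with
    | zero => simpa [CumA] using hCj
    | succ m =>
      by_contra hc
      have haj : a (m+1) = 0 := le_antisymm (not_lt.1 hc) (ha.1 _)
      have hCm : CumA a m = CumA a (m+1) := by rw [CumA_succ, haj, add_zero]
      have hgm : gD RA RD a m ≤ PayD RA RD a d := hgle m (by omega)
      rw [gD_eq RA RD a ha, ← hgj, hCm] at hgm
      have hme : ((m:ℝ)+1) < (RD:ℝ) := by exact_mod_cast hjlt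
      push_cast at hgm
      nlinarith
  -- the maximum of the defender's support
  set l := sSup {j : ℕ | 0 < d j} with hl
  have hSbdd : BddAbove {j : ℕ | 0 < d j} := ⟨RD, fun j hj => hd0 j hj⟩
  have hlS : 0 < d l := Nat.sSup_mem hdne hSbdd
  have hlub : ∀ j, 0 < d j → j ≤ l := fun j hj => le_csSup hSbdd hj
  -- Fact D : supp a ⊆ supp d ∪ {l+1}
  have factD : ∀ i, 0 < a i → 0 < d i ∨ i = l + 1 := by
    intro i hai
    by_contra hc
    push_neg at hc
    obtain ⟨hdi0, hne⟩ := hc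
    have hdi : d i = 0 := le_antisymm hdi0 (hd.1 i)
    rcases lt_or_ge (l+1) i with hgt | hle'
    · obtain ⟨m, rfl⟩ : ∃ m, i = m + 1 := ⟨i-1, by omega⟩
      obtain ⟨-, hdm, -⟩ := factA m hai
      have := hlub m hdm
      omega
    · have hil : i < l := by
        have hnei : i ≠ l := by
          intro h'
          rw [h'] at hdi
          linarith
        omega
      have hknonempty : ∃ k, i < k ∧ 0 < a k := ⟨l, hil, hsubDA l hlS⟩
      set k := Nat.find hknonempty with hk
      obtain ⟨hik, hak⟩ := Nat.find_spec hknonempty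
      have hzero : ∀ m, i ≤ m → m < k → d m = 0 := by
        intro m him hmk
        rcases eq_or_lt_of_le him with rfl | hlt'
        · exact hdi
        · by_contra hc2
          have hdm : 0 < d m := lt_of_le_of_ne (hd.1 m) (Ne.symm hc2)
          exact Nat.find_min hknonempty hmk ⟨hlt', hsubDA m hdm⟩
      have hstep : ∀ t, i + t ≤ k → fA RA RD d (i+t) = fA RA RD d i - t := by
        intro t
        induction t with
        | zero => intro _; simp
        | succ n ih =>
          intro hn
          have h1 := ih (by omega)
          have h2 := fA_succ RA RD d hd (i+n)
          have h3 : d (i+n) = 0 := hzero (i+n) (by omega) (by omega)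
          rw [h3, zero_mul, add_zero, h1] at h2
          rw [show i + (n+1) = (i+n)+1 from rfl, h2]
          push_cast; ring
      have hkk := hstep (k - i) (by omega)
      rw [show i + (k - i) = k by omega] at hkk
      have hMk := hfeq k hak
      have hMi := hfeq i hai
      have h1k : (1:ℝ) ≤ ((k - i:ℕ):ℝ) := by
        have : 1 ≤ k - i := by omega
        exact_mod_cast this
      linarith
  -- conclusion
  by_cases hcase : 0 < a (l + 1)
  · right
    ext i
    simp only [Set.mem_setOf_eq, Set.mem_union, Set.mem_singleton_iff]
    constructor
    · intro hi; exact factD i hi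
    · rintro (hi | rfl)
      · exact hsubDA i hi
      · exact hcase
  · left
    ext i
    simp only [Set.mem_setOf_eq]
    constructor
    · intro hi
      rcases factD i hi with h' | rfl
      · exact h'
      · exact absurd hi hcase
    · exact hsubDA i
end

section
/- In any mixed-strategy Nash equilibrium (a,d) of the Attacker-Defender game with endowments R_A and R_D, Attacker refrains from conflict with positive probability: 0 ∈ supp(a), i.e., a_0 > 0. -/
/- ### Auxiliary definitions and lemmas -/

open Finset

/-- The pure strategy on `k`. -/
noncomputable def pureStrat (k : ℕ) : ℕ → ℝ := fun i => if i = k then 1 else 0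

lemma pureStrat_mixed {R k : ℕ} (hk : k ≤ R) : IsMixed R (pureStrat k) := by
  refine ⟨fun i => ?_, fun i hi => ?_, ?_⟩
  · unfold pureStrat; split <;> norm_num
  · unfold pureStrat
    have : i ≠ k := by omega
    simp [this]
  · simp [pureStrat, Finset.sum_ite_eq', Nat.lt_succ_of_le hk]

/-- Attacker's payoff from pure strategy `i` against `d`. -/
noncomputable def uA (RA RD : ℕ) (d : ℕ → ℝ) (i : ℕ) : ℝ :=
  ∑ j ∈ range (RD + 1), d j * piA RA RD i j

/-- Defender's payoff from pure strategy `j` against `a`. -/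
noncomputable def vD (RA RD : ℕ) (a : ℕ → ℝ) (j : ℕ) : ℝ :=
  ∑ i ∈ range (RA + 1), a i * piD RD i j

lemma PayA_pure_s2 (RA RD : ℕ) (d : ℕ → ℝ) {k : ℕ} (hk : k ≤ RA) :
    PayA RA RD (pureStrat k) d = uA RA RD d k := by
  unfold PayA uA
  rw [Finset.sum_eq_single_of_mem k (Finset.mem_range.2 (Nat.lt_succ_of_le hk))]
  · simp [pureStrat]
  · intro i _ hik
    apply Finset.sum_eq_zero
    intro j _
    simp [pureStrat, hik]

lemma PayD_pure_s2 (RA RD : ℕ) (a : ℕ → ℝ) {k : ℕ} (hk : k ≤ RD) :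
    PayD RA RD a (pureStrat k) = vD RA RD a k := by
  unfold PayD vD
  apply Finset.sum_congr rfl
  intro i _
  rw [Finset.sum_eq_single_of_mem k (Finset.mem_range.2 (Nat.lt_succ_of_le hk))]
  · simp [pureStrat]
  · intro j _ hjk
    simp [pureStrat, hjk]

lemma PayA_eq_sum (RA RD : ℕ) (a d : ℕ → ℝ) :
    PayA RA RD a d = ∑ i ∈ range (RA + 1), a i * uA RA RD d i := by
  unfold PayA uA
  simp [Finset.mul_sum, mul_assoc]

lemma PayD_eq_sum (RA RD : ℕ) (a d : ℕ → ℝ) :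
    PayD RA RD a d = ∑ j ∈ range (RD + 1), d j * vD RA RD a j := by
  unfold PayD vD
  rw [Finset.sum_comm]
  apply Finset.sum_congr rfl
  intro j _
  rw [Finset.mul_sum]
  apply Finset.sum_congr rfl
  intro i _
  ring

/-- Support indifference: if a weighted average with weights summing to 1 of values
all `≤ P` equals `P`, then every value with positive weight equals `P`. -/
lemma support_indiff {s : Finset ℕ} {p f : ℕ → ℝ} {P : ℝ}
    (hp : ∀ i ∈ s, 0 ≤ p i) (hsum : ∑ i ∈ s, p i = 1)
    (hf : ∀ i ∈ s, f i ≤ P) (hP : ∑ i ∈ s, p i * f i = P)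
    {k : ℕ} (hk : k ∈ s) (hpk : 0 < p k) : f k = P := by
  have h0 : ∑ i ∈ s, p i * (P - f i) = 0 := by
    have : ∑ i ∈ s, p i * (P - f i)
        = (∑ i ∈ s, p i) * P - ∑ i ∈ s, p i * f i := by
      rw [Finset.sum_mul]
      rw [← Finset.sum_sub_distrib]
      apply Finset.sum_congr rfl
      intro i _; ring
    rw [this, hsum, hP]; ring
  have hnn : ∀ i ∈ s, 0 ≤ p i * (P - f i) := fun i hi =>
    mul_nonneg (hp i hi) (sub_nonneg.2 (hf i hi))
  have := (Finset.sum_eq_zero_iff_of_nonneg hnn).1 h0 k hk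
  have : P - f k = 0 := by
    rcases mul_eq_zero.1 this with h | h
    · exact absurd h (ne_of_gt hpk)
    · exact h
  linarith

/-- In any mixed equilibrium, Attacker refrains from conflict with positive probability. -/
theorem attacker_refrains_with_positive_probability (RA RD : ℕ) (hA : 2 ≤ RA) (hD : 2 ≤ RD)
    (a d : ℕ → ℝ) (h : IsNash RA RD a d) :
    0 < a 0 := by
  obtain ⟨⟨ha0, haR, ha1⟩, ⟨hd0, hdR, hd1⟩, hNA, hND⟩ := h
  by_contra hcon
  push_neg at hcon
  have ha00 : a 0 = 0 := le_antisymm hcon (ha0 0)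
  -- Nash conditions against pure strategies
  have hUA : ∀ k ≤ RA, uA RA RD d k ≤ PayA RA RD a d := fun k hk => by
    rw [← PayA_pure_s2 RA RD d hk]; exact hNA _ (pureStrat_mixed hk)
  have hVD : ∀ k ≤ RD, vD RA RD a k ≤ PayD RA RD a d := fun k hk => by
    rw [← PayD_pure_s2 RA RD a hk]; exact hND _ (pureStrat_mixed hk)
  -- there is a support point
  have hex : ∃ i, 0 < a i := by
    by_contra hno
    push_neg at hno
    have : ∑ i ∈ range (RA + 1), a i = 0 :=
      Finset.sum_eq_zero fun i _ => le_antisymm (hno i) (ha0 i)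
    rw [ha1] at this; norm_num at this
  set m := Nat.find hex with hm
  have ham : 0 < a m := Nat.find_spec hex
  have hmin : ∀ i < m, a i = 0 := fun i hi =>
    le_antisymm (not_lt.1 (Nat.find_min hex hi)) (ha0 i)
  have hm1 : 1 ≤ m := by
    rcases Nat.eq_zero_or_pos m with h0 | h0
    · rw [h0] at ham; rw [ha00] at ham; exact absurd ham (lt_irrefl 0)
    · exact h0
  have hmRA : m ≤ RA := by
    by_contra hmc
    push_neg at hmc
    rw [haR m hmc] at ham; exact absurd ham (lt_irrefl 0)
  -- uA 0 = RA
  have hu0 : uA RA RD d 0 = RA := by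
    unfold uA
    have : ∀ j ∈ range (RD + 1), d j * piA RA RD 0 j = d j * RA := by
      intro j _
      unfold piA
      rw [if_neg (Nat.not_lt_zero j)]
      norm_num
    rw [Finset.sum_congr rfl this, ← Finset.sum_mul, hd1, one_mul]
  -- uA m = RA - m + S
  set S : ℝ := ∑ j ∈ range (RD + 1), d j * (if j < m then (RD:ℝ) - j else 0) with hS
  have hum : uA RA RD d m = (RA : ℝ) - m + S := by
    unfold uA piA
    have : ∀ j ∈ range (RD + 1),
        d j * (if j < m then (RA:ℝ) - m + ((RD:ℝ) - j) else (RA:ℝ) - m)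
        = d j * ((RA:ℝ) - m) + d j * (if j < m then (RD:ℝ) - j else 0) := by
      intro j _
      split <;> ring
    rw [Finset.sum_congr rfl this, Finset.sum_add_distrib, ← Finset.sum_mul, hd1, hS, one_mul]
  -- equilibrium payoff
  set P := PayA RA RD a d with hPdef
  have humP : uA RA RD d m = P := by
    apply support_indiff (fun i _ => ha0 i) ha1
      (fun i hi => hUA i (Nat.lt_succ_iff.1 (Finset.mem_range.1 hi)))
      (PayA_eq_sum RA RD a d).symm (Finset.mem_range.2 (Nat.lt_succ_of_le hmRA)) ham
  have hPRA : (RA : ℝ) ≤ P := by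
    have := hUA 0 (by omega)
    rw [hu0] at this; exact this
  have hSm : (m : ℝ) ≤ S := by
    have := humP
    rw [hum] at this
    linarith
  -- case split
  rcases lt_or_ge m RD with hcase | hcase
  · -- m < RD : defender contradiction
    have hSpos : 0 < S := lt_of_lt_of_le (by exact_mod_cast hm1) hSm
    -- there is j0 with positive term
    have hex2 : ∃ j0 ∈ range (RD + 1), 0 < d j0 * (if j0 < m then (RD:ℝ) - j0 else 0) := by
      by_contra hno
      push_neg at hno
      have : S ≤ 0 := Finset.sum_nonpos hno
      linarith
    obtain ⟨j0, hj0mem, hj0pos⟩ := hex2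
    have hdj0 : 0 < d j0 := by
      by_contra h'
      push_neg at h'
      have hite : 0 ≤ (if j0 < m then (RD:ℝ) - j0 else 0) := by
        split
        · have hj0RD : (j0 : ℝ) ≤ RD := by
            exact_mod_cast Nat.lt_succ_iff.1 (Finset.mem_range.1 hj0mem)
          linarith
        · exact le_refl 0
      have := mul_nonpos_of_nonpos_of_nonneg h' hite
      linarith
    have hj0m : j0 < m := by
      by_contra hc
      rw [if_neg hc] at hj0pos
      simp at hj0pos
    -- vD j0 = 0
    have hvj0 : vD RA RD a j0 = 0 := by
      unfold vD piD
      apply Finset.sum_eq_zero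
      intro i _
      rcases lt_or_ge j0 i with hlt | hle
      · rw [if_pos hlt, mul_zero]
      · rw [hmin i (lt_of_le_of_lt hle hj0m), zero_mul]
    -- defender equilibrium payoff
    set Q := PayD RA RD a d with hQdef
    have hQ0 : Q = 0 := by
      have := support_indiff (fun j _ => hd0 j) hd1
        (fun j hj => hVD j (Nat.lt_succ_iff.1 (Finset.mem_range.1 hj)))
        (PayD_eq_sum RA RD a d).symm hj0mem hdj0
      rw [hvj0] at this; exact this.symm
    -- but vD m > 0
    have hvmQ : vD RA RD a m ≤ Q := hVD m (le_of_lt hcase)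
    have hvmpos : 0 < vD RA RD a m := by
      unfold vD
      have hmem : m ∈ range (RA + 1) := Finset.mem_range.2 (Nat.lt_succ_of_le hmRA)
      have hterm : 0 < a m * piD RD m m := by
        unfold piD
        rw [if_neg (lt_irrefl m)]
        apply mul_pos ham
        have : (m : ℝ) < RD := by exact_mod_cast hcase
        linarith
      have hnn : ∀ i ∈ range (RA + 1), 0 ≤ a i * piD RD i m := by
        intro i _
        apply mul_nonneg (ha0 i)
        unfold piD
        split
        · exact le_refl 0
        · have : (m : ℝ) ≤ RD := by exact_mod_cast le_of_lt hcase
          linarith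
      calc (0:ℝ) < a m * piD RD m m := hterm
        _ ≤ ∑ i ∈ range (RA + 1), a i * piD RD i m :=
            Finset.single_le_sum hnn hmem
    rw [hQ0] at hvmQ
    linarith
  · -- RD ≤ m : attacker deviation to 1
    have hd01 : d 0 ≤ 1 := by
      have := Finset.single_le_sum (fun j (_ : j ∈ range (RD + 1)) => hd0 j)
        (Finset.mem_range.2 (by omega : 0 < RD + 1))
      rw [hd1] at this; exact this
    -- S ≤ RD - 1 + d 0
    have hSbound : S ≤ (RD : ℝ) - 1 + d 0 := by
      have hle : ∀ j ∈ range (RD + 1),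
          d j * (if j < m then (RD:ℝ) - j else 0)
          ≤ d j * ((RD:ℝ) - 1) + (if j = 0 then d 0 else 0) := by
        intro j hj
        rcases Nat.eq_zero_or_pos j with h0 | h0
        · subst h0
          rw [if_pos (by omega : 0 < m), if_pos rfl]
          push_cast
          nlinarith [hd0 0]
        · rw [if_neg (by omega : j ≠ 0), add_zero]
          have hjRD : (j : ℝ) ≤ RD := by
            exact_mod_cast Nat.lt_succ_iff.1 (Finset.mem_range.1 hj)
          have hj1 : (1 : ℝ) ≤ j := by exact_mod_cast h0
          split
          · apply mul_le_mul_of_nonneg_left _ (hd0 j)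
            linarith
          · rw [mul_zero]
            apply mul_nonneg (hd0 j)
            have : (2 : ℝ) ≤ RD := by exact_mod_cast hD
            linarith
      calc S ≤ ∑ j ∈ range (RD + 1),
            (d j * ((RD:ℝ) - 1) + (if j = 0 then d 0 else 0)) :=
            Finset.sum_le_sum hle
        _ = (∑ j ∈ range (RD + 1), d j) * ((RD:ℝ) - 1) + d 0 := by
            rw [Finset.sum_add_distrib, ← Finset.sum_mul,
              Finset.sum_ite_eq' (range (RD + 1)) 0 (fun _ => d 0)]
            simp
        _ = (RD : ℝ) - 1 + d 0 := by rw [hd1, one_mul]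
    have hRDm : (RD : ℝ) ≤ m := by exact_mod_cast hcase
    have hd0ge : 1 ≤ d 0 := by linarith
    have hd0eq : d 0 = 1 := le_antisymm hd01 hd0ge
    -- uA 1 = RA - 1 + d 0 * RD
    have hu1 : uA RA RD d 1 = (RA : ℝ) - 1 + d 0 * RD := by
      unfold uA piA
      push_cast
      have : ∀ j ∈ range (RD + 1),
          d j * (if j < 1 then (RA:ℝ) - 1 + ((RD:ℝ) - j) else (RA:ℝ) - 1)
          = d j * ((RA:ℝ) - 1) + (if j = 0 then d 0 * RD else 0) := by
        intro j _
        rcases Nat.eq_zero_or_pos j with h0 | h0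
        · subst h0
          rw [if_pos (by omega : 0 < 1), if_pos rfl]
          push_cast; ring
        · rw [if_neg (by omega : ¬ j < 1), if_neg (by omega : j ≠ 0), add_zero]
      rw [Finset.sum_congr rfl this, Finset.sum_add_distrib, ← Finset.sum_mul, hd1,
        Finset.sum_ite_eq' (range (RD + 1)) 0 (fun _ => d 0 * (RD:ℝ))]
      simp
    have hP1 : (RA : ℝ) - 1 + d 0 * RD ≤ P := by
      rw [← hu1]; exact hUA 1 (by omega)
    have hPm : P = (RA : ℝ) - m + S := by rw [← humP, hum]
    have hRD2 : (2 : ℝ) ≤ RD := by exact_mod_cast hD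
    rw [hd0eq] at hP1
    -- P = RA - m + S ≤ RA - m + RD - 1 + d 0 ≤ RA, but P ≥ RA - 1 + RD
    have : (m : ℝ) ≤ m := le_refl _
    linarith
end

section
/- In any mixed-strategy Nash equilibrium (a,d) of the Attacker-Defender game with endowments R_A and R_D, Defender's support contains all investments up to its maximum: supp(d) = {0, 1, ..., l} where l = max supp(d). -/
/-- Attacker's expected payoff of pure strategy `i` against `d`. -/
noncomputable def Gfun (RA RD : ℕ) (d : ℕ → ℝ) (i : ℕ) : ℝ :=
  ∑ j ∈ Finset.range (RD + 1), d j * piA RA RD i j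

/-- Defender's expected payoff of pure strategy `j` against `a`. -/
noncomputable def Hfun (RA RD : ℕ) (a : ℕ → ℝ) (j : ℕ) : ℝ :=
  ∑ i ∈ Finset.range (RA + 1), a i * piD RD i j

/-- Attacker's CDF. -/
noncomputable def Ffun (RA : ℕ) (a : ℕ → ℝ) (j : ℕ) : ℝ :=
  ∑ i ∈ Finset.range (RA + 1), if i ≤ j then a i else 0

lemma payA_eq (RA RD : ℕ) (a d : ℕ → ℝ) :
    PayA RA RD a d = ∑ i ∈ Finset.range (RA + 1), a i * Gfun RA RD d i := by
  unfold PayA Gfun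
  refine Finset.sum_congr rfl fun i _ => ?_
  rw [Finset.mul_sum]
  exact Finset.sum_congr rfl fun j _ => by ring

lemma payD_eq (RA RD : ℕ) (a d : ℕ → ℝ) :
    PayD RA RD a d = ∑ j ∈ Finset.range (RD + 1), d j * Hfun RA RD a j := by
  unfold PayD Hfun
  rw [Finset.sum_comm]
  refine Finset.sum_congr rfl fun j _ => ?_
  rw [Finset.mul_sum]
  exact Finset.sum_congr rfl fun i _ => by ring

lemma exchange_sum (R : ℕ) (s : ℕ → ℝ) (i k : ℕ) (hi : i ≤ R) (hk : k ≤ R) (f : ℕ → ℝ) :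
    ∑ m ∈ Finset.range (R + 1),
        (s m + (if m = k then s i else 0) - (if m = i then s i else 0)) * f m
      = (∑ m ∈ Finset.range (R + 1), s m * f m) + s i * f k - s i * f i := by
  have hi' : i ∈ Finset.range (R + 1) := Finset.mem_range.2 (Nat.lt_succ_of_le hi)
  have hk' : k ∈ Finset.range (R + 1) := Finset.mem_range.2 (Nat.lt_succ_of_le hk)
  simp only [add_mul, sub_mul, ite_mul, zero_mul]
  rw [Finset.sum_sub_distrib, Finset.sum_add_distrib,
    Finset.sum_ite_eq' _ k (fun m => s i * f m), Finset.sum_ite_eq' _ i (fun m => s i * f m)]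
  simp [hi', hk']

lemma exchange_mixed (R : ℕ) (s : ℕ → ℝ) (hs : IsMixed R s) (i k : ℕ) (hi : i ≤ R) (hk : k ≤ R) :
    IsMixed R (fun m => s m + (if m = k then s i else 0) - (if m = i then s i else 0)) := by
  obtain ⟨h1, h2, h3⟩ := hs
  refine ⟨fun m => ?_, fun m hm => ?_, ?_⟩
  · show 0 ≤ (s m + if m = k then s i else 0) - if m = i then s i else 0
    split_ifs <;> subst_vars <;>
      first
        | linarith [h1 m, h1 i, h1 k]
        | linarith [h1 m, h1 i]
        | linarith [h1 m, h1 k]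
        | linarith [h1 m]
  · have hmk : m ≠ k := by omega
    have hmi : m ≠ i := by omega
    simp [hmk, hmi, h2 m hm]
  · have := exchange_sum R s i k hi hk (fun _ => 1)
    simpa [h3] using this

lemma attacker_br {RA RD : ℕ} {a d : ℕ → ℝ} (h : IsNash RA RD a d) {i : ℕ} (hai : 0 < a i)
    {k : ℕ} (hk : k ≤ RA) : Gfun RA RD d k ≤ Gfun RA RD d i := by
  obtain ⟨ha, hd, hA, _⟩ := h
  have hi : i ≤ RA := by
    by_contra hc
    exact absurd (ha.2.1 i (Nat.lt_of_not_le hc)) (ne_of_gt hai)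
  have hmix := exchange_mixed RA a ha i k hi hk
  have hle := hA _ hmix
  rw [payA_eq, payA_eq] at hle
  rw [exchange_sum RA a i k hi hk (Gfun RA RD d)] at hle
  have : a i * Gfun RA RD d k ≤ a i * Gfun RA RD d i := by linarith
  exact le_of_mul_le_mul_left this hai

lemma defender_br {RA RD : ℕ} {a d : ℕ → ℝ} (h : IsNash RA RD a d) {j : ℕ} (hdj : 0 < d j)
    {m : ℕ} (hm : m ≤ RD) : Hfun RA RD a m ≤ Hfun RA RD a j := by
  obtain ⟨ha, hd, _, hDD⟩ := h
  have hj : j ≤ RD := by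
    by_contra hc
    exact absurd (hd.2.1 j (Nat.lt_of_not_le hc)) (ne_of_gt hdj)
  have hmix := exchange_mixed RD d hd j m hj hm
  have hle := hDD _ hmix
  rw [payD_eq, payD_eq] at hle
  rw [exchange_sum RD d j m hj hm (Hfun RA RD a)] at hle
  have : d j * Hfun RA RD a m ≤ d j * Hfun RA RD a j := by linarith
  exact le_of_mul_le_mul_left this hdj

lemma G_gap (RA RD : ℕ) {d : ℕ → ℝ} (hd : IsMixed RD d) {k i : ℕ} (hki : k ≤ i)
    (h0 : ∀ j, k ≤ j → j < i → d j = 0) :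
    Gfun RA RD d i = Gfun RA RD d k + ((k : ℝ) - i) := by
  have key : ∀ j ∈ Finset.range (RD + 1),
      d j * piA RA RD i j = d j * piA RA RD k j + d j * ((k : ℝ) - i) := by
    intro j _
    by_cases h1 : j < k
    · have h2 : j < i := lt_of_lt_of_le h1 hki
      simp only [piA, if_pos h1, if_pos h2]
      ring
    · by_cases h2 : j < i
      · rw [h0 j (Nat.le_of_not_lt h1) h2]
        ring
      · simp only [piA, if_neg h1, if_neg h2]
        ring
  unfold Gfun
  rw [Finset.sum_congr rfl key, Finset.sum_add_distrib, ← Finset.sum_mul, hd.2.2]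
  ring

lemma H_eq (RA RD : ℕ) (a : ℕ → ℝ) (j : ℕ) :
    Hfun RA RD a j = ((RD : ℝ) - j) * Ffun RA a j := by
  unfold Hfun Ffun
  rw [Finset.mul_sum]
  refine Finset.sum_congr rfl fun i _ => ?_
  by_cases hij : i ≤ j
  · simp only [piD, if_neg (Nat.not_lt.2 hij), if_pos hij]
    ring
  · simp only [piD, if_pos (Nat.lt_of_not_le hij), if_neg hij]
    ring

lemma F_nonneg (RA : ℕ) {a : ℕ → ℝ} (ha : ∀ i, 0 ≤ a i) (j : ℕ) : 0 ≤ Ffun RA a j := by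
  apply Finset.sum_nonneg
  intro i _
  split <;> simp [ha i]

lemma F_gap (RA : ℕ) {a : ℕ → ℝ} {k k' : ℕ} (hkk : k ≤ k')
    (h0 : ∀ i, k < i → i ≤ k' → a i = 0) : Ffun RA a k' = Ffun RA a k := by
  unfold Ffun
  refine Finset.sum_congr rfl fun i _ => ?_
  by_cases h1 : i ≤ k
  · simp [h1, le_trans h1 hkk]
  · by_cases h2 : i ≤ k'
    · simp [h1, h2, h0 i (Nat.lt_of_not_le h1) h2]
    · simp [h1, h2]

lemma F_zero {RA : ℕ} {a : ℕ → ℝ} (ha : ∀ i, 0 ≤ a i) {j : ℕ} (hF : Ffun RA a j = 0)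
    {i : ℕ} (hi : i ∈ Finset.range (RA + 1)) (hij : i ≤ j) : a i = 0 := by
  have hterm : ∀ m ∈ Finset.range (RA + 1), 0 ≤ (if m ≤ j then a m else 0) := by
    intro m _
    split <;> simp [ha m]
  have := (Finset.sum_eq_zero_iff_of_nonneg hterm).1 hF i hi
  simpa [hij] using this

lemma exists_pos {R : ℕ} {s : ℕ → ℝ} (hs : IsMixed R s) : ∃ i, i ≤ R ∧ 0 < s i := by
  by_contra hc
  push_neg at hc
  have : ∑ i ∈ Finset.range (R + 1), s i = 0 := by
    apply Finset.sum_eq_zero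
    intro i hi
    have hiR : i ≤ R := Nat.lt_succ_iff.1 (Finset.mem_range.1 hi)
    exact le_antisymm (hc i hiR) (hs.1 i)
  rw [hs.2.2] at this
  norm_num at this

/-- In any mixed equilibrium, Defender's support is `{0, 1, ..., l}` where
`l = max supp(d)`. -/
theorem defender_support_is_initial_segment (RA RD : ℕ) (hA : 2 ≤ RA) (hD : 2 ≤ RD)
    (a d : ℕ → ℝ) (h : IsNash RA RD a d) :
    {j : ℕ | 0 < d j} = Set.Iic (sSup {j : ℕ | 0 < d j}) := by
  obtain ⟨ha, hd, hAA, hDD⟩ := h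
  have h' : IsNash RA RD a d := ⟨ha, hd, hAA, hDD⟩
  have hmem_le : ∀ j ∈ {j : ℕ | 0 < d j}, j ≤ RD := by
    intro j hj
    by_contra hc
    exact absurd (hd.2.1 j (Nat.lt_of_not_le hc)) (ne_of_gt hj)
  have hbdd : BddAbove {j : ℕ | 0 < d j} := ⟨RD, hmem_le⟩
  have hne : {j : ℕ | 0 < d j}.Nonempty := by
    obtain ⟨j, _, hj⟩ := exists_pos hd
    exact ⟨j, hj⟩
  set l := sSup {j : ℕ | 0 < d j} with hldef
  have hl : 0 < d l := Nat.sSup_mem hne hbdd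
  have hlRD : l ≤ RD := hmem_le l hl
  apply Set.Subset.antisymm
  · intro j hj
    exact le_csSup hbdd hj
  · intro k hk
    have hkl' : k ≤ l := hk
    by_contra hdk0
    have hdk0' : ¬ 0 < d k := hdk0
    have hdk : d k = 0 := le_antisymm (not_lt.1 hdk0') (hd.1 k)
    have hkl : k < l := lt_of_le_of_ne hkl' (by rintro rfl; exact hdk0' hl)
    have hTne : {j : ℕ | 0 < d j ∧ k < j}.Nonempty := ⟨l, hl, hkl⟩
    set k' := sInf {j : ℕ | 0 < d j ∧ k < j} with hk'def
    have hk'mem := Nat.sInf_mem hTne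
    rw [← hk'def] at hk'mem
    obtain ⟨hk'S, hkk'⟩ := hk'mem
    have hk'l : k' ≤ l := Nat.sInf_le (show l ∈ {j : ℕ | 0 < d j ∧ k < j} from ⟨hl, hkl⟩)
    have hk'RD : k' ≤ RD := le_trans hk'l hlRD
    have hkRD : k ≤ RD := le_trans hkl' hlRD
    have hgap : ∀ j, k ≤ j → j < k' → d j = 0 := by
      intro j hkj hjk'
      rcases eq_or_lt_of_le hkj with rfl | hlt
      · exact hdk
      · by_contra hc
        have hpos : 0 < d j := lt_of_le_of_ne (hd.1 j) (Ne.symm hc)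
        exact absurd (Nat.sInf_le (show j ∈ {j : ℕ | 0 < d j ∧ k < j} from ⟨hpos, hlt⟩)) (Nat.not_le.2 hjk')
    by_cases hcase : ∃ i, k < i ∧ i ≤ k' ∧ 0 < a i
    · -- Attacker puts mass in (k, k']: deviating to k gains i - k.
      obtain ⟨i, hki, hik', hai⟩ := hcase
      have hiRA : i ≤ RA := by
        by_contra hc
        exact absurd (ha.2.1 i (Nat.lt_of_not_le hc)) (ne_of_gt hai)
      have hGk : Gfun RA RD d i = Gfun RA RD d k + ((k : ℝ) - i) :=
        G_gap RA RD hd hki.le (fun j h1 h2 => hgap j h1 (lt_of_lt_of_le h2 hik'))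
      have hbr := attacker_br h' hai (le_trans hki.le hiRA)
      have hcast : (k : ℝ) < i := by exact_mod_cast hki
      linarith
    · push_neg at hcase
      have hzero : ∀ i, k < i → i ≤ k' → a i = 0 := fun i h1 h2 =>
        le_antisymm (hcase i h1 h2) (ha.1 i)
      have hF : Ffun RA a k' = Ffun RA a k := F_gap RA hkk'.le hzero
      by_cases hFpos : 0 < Ffun RA a k'
      · -- Defender deviating from k' to k gains.
        have hbr := defender_br h' hk'S hkRD
        rw [H_eq, H_eq, hF] at hbr
        have h1 : (k : ℝ) < k' := by exact_mod_cast hkk'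
        have h2 : (k' : ℝ) ≤ RD := by exact_mod_cast hk'RD
        rw [hF] at hFpos
        nlinarith
      · -- Attacker never plays ≤ k': defender's value is 0, forcing attacker high,
        -- and then attacker prefers 0 since defender puts mass on l ≥ 1.
        have hF0 : Ffun RA a k' = 0 := le_antisymm (not_lt.1 hFpos) (F_nonneg RA ha.1 k')
        have hHk' : Hfun RA RD a k' = 0 := by
          rw [H_eq, hF0, mul_zero]
        have hFm : Ffun RA a (RD - 1) = 0 := by
          have hbr := defender_br h' hk'S (show RD - 1 ≤ RD by omega)
          rw [H_eq, hHk'] at hbr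
          have hc1 : ((RD : ℝ) - (RD - 1 : ℕ)) = 1 := by
            have : ((RD - 1 : ℕ) : ℝ) = (RD : ℝ) - 1 := by
              push_cast [Nat.cast_sub (by omega : 1 ≤ RD)]
              ring
            rw [this]; ring
          rw [hc1, one_mul] at hbr
          exact le_antisymm hbr (F_nonneg RA ha.1 (RD - 1))
        have hlowzero : ∀ i, i ≤ RD - 1 → a i = 0 := by
          intro i hi
          by_cases hiRA : i ≤ RA
          · exact F_zero ha.1 hFm (Finset.mem_range.2 (Nat.lt_succ_of_le hiRA)) hi
          · exact ha.2.1 i (Nat.lt_of_not_le hiRA)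
        obtain ⟨i0, hi0RA, hi0⟩ := exists_pos ha
        have hRDi0 : RD ≤ i0 := by
          by_contra hc
          exact absurd (hlowzero i0 (by omega)) (ne_of_gt hi0)
        -- compute G i0 = G 0 + (RD - i0) - ∑ d j * j
        have key : ∀ j ∈ Finset.range (RD + 1),
            d j * piA RA RD i0 j = d j * piA RA RD 0 j + d j * ((RD : ℝ) - j - i0) := by
          intro j hj
          have hjRD : j ≤ RD := Nat.lt_succ_iff.1 (Finset.mem_range.1 hj)
          by_cases hji : j < i0
          · simp only [piA, if_pos hji, if_neg (Nat.not_lt_zero j)]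
            ring
          · have hjRD' : j = RD := le_antisymm hjRD (le_trans hRDi0 (Nat.le_of_not_lt hji))
            have hii : i0 = RD := le_antisymm (by omega) hRDi0
            subst hjRD'
            simp only [piA, if_pos, if_neg hji, if_neg (Nat.not_lt_zero j)]
            rw [hii]
            push_cast
            ring
        have hGsum : Gfun RA RD d i0 = Gfun RA RD d 0 + ((RD : ℝ) - i0)
            - ∑ j ∈ Finset.range (RD + 1), d j * j := by
          unfold Gfun
          rw [Finset.sum_congr rfl key, Finset.sum_add_distrib]
          have : ∑ j ∈ Finset.range (RD + 1), d j * ((RD : ℝ) - j - i0)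
              = ((RD : ℝ) - i0) * (∑ j ∈ Finset.range (RD + 1), d j)
                - ∑ j ∈ Finset.range (RD + 1), d j * j := by
            rw [Finset.mul_sum, ← Finset.sum_sub_distrib]
            exact Finset.sum_congr rfl fun j _ => by ring
          rw [this, hd.2.2]
          ring
        have hsum_lb : d l * l ≤ ∑ j ∈ Finset.range (RD + 1), d j * j := by
          apply Finset.single_le_sum (f := fun j => d j * (j : ℝ))
          · intro j _
            exact mul_nonneg (hd.1 j) (Nat.cast_nonneg j)
          · exact Finset.mem_range.2 (Nat.lt_succ_of_le hlRD)
        have hlpos : 0 < d l * l := by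
          apply mul_pos hl
          have : 1 ≤ l := by omega
          exact_mod_cast Nat.lt_of_lt_of_le Nat.zero_lt_one this
        have hbr := attacker_br h' hi0 (Nat.zero_le RA)
        have hcast : (RD : ℝ) ≤ i0 := by exact_mod_cast hRDi0
        linarith
end

section
/- For all integers m, n with 1 ≤ m < n, the partial sum of the harmonic series Σ_{k=m}^{n} 1/k is not an integer; in particular, for any integers 1 ≤ m < n, Σ_{k=m}^{n} 1/k ≠ 1. -/
/-- Key lemma: in `Icc m n` with `1 ≤ m < n`, there is an element of strictly maximal
2-adic valuation, and that valuation is at least 1. -/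
lemma exists_unique_max_two_val (m n : ℕ) (hm : 1 ≤ m) (hmn : m < n) :
    ∃ k₀ ∈ Finset.Icc m n, 1 ≤ padicValNat 2 k₀ ∧
      ∀ k ∈ Finset.Icc m n, k ≠ k₀ → padicValNat 2 k < padicValNat 2 k₀ := by
  obtain ⟨k₀, hk₀, hmax⟩ := Finset.exists_max_image (Finset.Icc m n) (padicValNat 2)
    ⟨m, Finset.mem_Icc.mpr ⟨le_refl m, hmn.le⟩⟩
  set t := padicValNat 2 k₀ with ht
  have hk₀pos : 0 < k₀ := lt_of_lt_of_le hm (Finset.mem_Icc.mp hk₀).1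
  -- t ≥ 1 : there is an even number in [m, n]
  have ht1 : 1 ≤ t := by
    rcases Nat.even_or_odd m with he | ho
    · have : padicValNat 2 m ≥ 1 := by
        apply one_le_padicValNat_of_dvd (by omega) he.two_dvd
      calc 1 ≤ padicValNat 2 m := this
        _ ≤ t := hmax m (Finset.mem_Icc.mpr ⟨le_refl m, hmn.le⟩)
    · have hmem : m + 1 ∈ Finset.Icc m n := Finset.mem_Icc.mpr ⟨by omega, by omega⟩
      have : 1 ≤ padicValNat 2 (m + 1) := by
        apply one_le_padicValNat_of_dvd (by omega)
        obtain ⟨c, hc⟩ := ho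
        omega
      exact le_trans this (hmax _ hmem)
  refine ⟨k₀, hk₀, ht1, ?_⟩
  -- uniqueness
  intro k hk hne
  rcases lt_or_eq_of_le (hmax k hk) with h | heq
  · exact h
  exfalso
  -- both k and k₀ have valuation exactly t; derive a contradiction
  have hkpos : 0 < k := lt_of_lt_of_le hm (Finset.mem_Icc.mp hk).1
  -- write k = 2^t * a, k₀ = 2^t * b with a b odd
  have hdk : (2 : ℕ) ^ t ∣ k := heq ▸ pow_padicValNat_dvd
  have hdk₀ : (2 : ℕ) ^ t ∣ k₀ := pow_padicValNat_dvd
  have hndk : ¬ (2 : ℕ) ^ (t + 1) ∣ k := by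
    rw [← heq]; exact pow_succ_padicValNat_not_dvd hkpos.ne'
  have hndk₀ : ¬ (2 : ℕ) ^ (t + 1) ∣ k₀ := pow_succ_padicValNat_not_dvd hk₀pos.ne'
  obtain ⟨a, ha⟩ := hdk
  obtain ⟨b, hb⟩ := hdk₀
  have hao : Odd a := by
    rcases Nat.even_or_odd a with he | ho
    · exfalso; apply hndk; obtain ⟨c, hc⟩ := he
      exact ⟨c, by rw [ha, hc]; ring⟩
    · exact ho
  have hbo : Odd b := by
    rcases Nat.even_or_odd b with he | ho
    · exfalso; apply hndk₀; obtain ⟨c, hc⟩ := he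
      exact ⟨c, by rw [hb, hc]; ring⟩
    · exact ho
  -- WLOG consider c = min, d = max; there is a multiple of 2^(t+1) strictly between
  have hab : a ≠ b := by
    rintro rfl; exact hne (ha.trans hb.symm)
  have h2t : 0 < (2:ℕ)^t := Nat.pow_pos (by norm_num)
  -- let e be the smaller of a, b; then 2^t * (e+1) is in the interval and divisible by 2^(t+1)
  obtain ⟨e, f, he, hfo, hef, hrange⟩ :
      ∃ e f : ℕ, Odd e ∧ Odd f ∧ e < f ∧
        (2^t * e ∈ Finset.Icc m n ∧ 2^t * f ∈ Finset.Icc m n) := by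
    rcases lt_or_gt_of_ne hab with h' | h'
    · exact ⟨a, b, hao, hbo, h', ha ▸ hk, hb ▸ hk₀⟩
    · exact ⟨b, a, hbo, hao, h', hb ▸ hk₀, ha ▸ hk⟩
  have hmid : 2^t * (e + 1) ∈ Finset.Icc m n := by
    simp only [Finset.mem_Icc] at hrange ⊢
    constructor
    · calc m ≤ 2^t * e := hrange.1.1
        _ ≤ 2^t * (e+1) := by nlinarith
    · calc 2^t * (e+1) ≤ 2^t * f := by
            have : e + 1 ≤ f := hef
            exact Nat.mul_le_mul_left _ this
        _ ≤ n := hrange.2.2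
  have hdvd : (2:ℕ)^(t+1) ∣ 2^t * (e+1) := by
    obtain ⟨c, hc⟩ := he
    exact ⟨c + 1, by rw [hc]; ring⟩
  have hvmid : t + 1 ≤ padicValNat 2 (2^t * (e+1)) := by
    rw [← padicValNat_dvd_iff_le (by positivity)]
    exact hdvd
  have := hmax _ hmid
  omega

/-- For `1 ≤ m < n`, the partial harmonic sum `∑_{k=m}^{n} 1/k` is not an integer;
in particular it is not equal to `1`. -/
theorem harmonic_partial_sum_not_integer (m n : ℕ) (hm : 1 ≤ m) (hmn : m < n) :
    (¬ ∃ z : ℤ, ∑ k ∈ Finset.Icc m n, (1 : ℚ) / k = (z : ℚ)) ∧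
    ∑ k ∈ Finset.Icc m n, (1 : ℚ) / k ≠ 1 := by
  obtain ⟨k₀, hk₀, ht1, huniq⟩ := exists_unique_max_two_val m n hm hmn
  set t := padicValNat 2 k₀ with ht
  -- replace the summand by a function positive everywhere
  set F : ℕ → ℚ := fun i => if i = 0 then 1 else 1 / i with hF
  have hFpos : ∀ i, 0 < F i := by
    intro i
    by_cases h : i = 0 <;> simp [hF, h] <;> positivity
  have hFeq : ∀ k ∈ Finset.Icc m n, F k = 1 / k := by
    intro k hk
    have : k ≠ 0 := by have := (Finset.mem_Icc.mp hk).1; omega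
    simp [hF, this]
  have hsum_eq : ∑ k ∈ Finset.Icc m n, (1 : ℚ) / k = ∑ k ∈ Finset.Icc m n, F k :=
    (Finset.sum_congr rfl hFeq).symm
  have hFval : ∀ k ∈ Finset.Icc m n, padicValRat 2 (F k) = -(padicValNat 2 k : ℤ) := by
    intro k hk
    have hkne : k ≠ 0 := by have := (Finset.mem_Icc.mp hk).1; omega
    rw [hFeq k hk, one_div, padicValRat.inv, padicValRat.of_nat]
  -- split off k₀
  have hsplit : ∑ k ∈ Finset.Icc m n, F k
      = F k₀ + ∑ k ∈ (Finset.Icc m n).erase k₀, F k :=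
    (Finset.add_sum_erase _ F hk₀).symm
  have herase_ne : ((Finset.Icc m n).erase k₀).Nonempty := by
    rcases eq_or_ne k₀ m with rfl | h
    · exact ⟨n, Finset.mem_erase.mpr ⟨by omega, Finset.mem_Icc.mpr ⟨hmn.le, le_refl n⟩⟩⟩
    · exact ⟨m, Finset.mem_erase.mpr ⟨h.symm, Finset.mem_Icc.mpr ⟨le_refl m, hmn.le⟩⟩⟩
  have hrest_pos : 0 < ∑ k ∈ (Finset.Icc m n).erase k₀, F k :=
    Finset.sum_pos (fun i _ => hFpos i) herase_ne
  have hvlt : padicValRat 2 (F k₀) < padicValRat 2 (∑ k ∈ (Finset.Icc m n).erase k₀, F k) := by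
    apply padicValRat.lt_sum_of_lt herase_ne _ hFpos
    intro i hi
    rw [hFval k₀ hk₀, hFval i (Finset.mem_of_mem_erase hi)]
    have := huniq i (Finset.mem_of_mem_erase hi) (Finset.ne_of_mem_erase hi)
    omega
  have hval : padicValRat 2 (∑ k ∈ Finset.Icc m n, F k) = -(t : ℤ) := by
    rw [hsplit, padicValRat.add_eq_of_lt _ (hFpos k₀).ne' hrest_pos.ne' hvlt, hFval k₀ hk₀]
    exact (add_pos (hFpos k₀) hrest_pos).ne'
  have hneg : padicValRat 2 (∑ k ∈ Finset.Icc m n, (1:ℚ) / k) < 0 := by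
    rw [hsum_eq, hval]; omega
  have key : ¬ ∃ z : ℤ, ∑ k ∈ Finset.Icc m n, (1 : ℚ) / k = (z : ℚ) := by
    rintro ⟨z, hz⟩
    rw [hz] at hneg
    have : (0:ℤ) ≤ padicValRat 2 (z : ℚ) := by
      rw [padicValRat.of_int]; positivity
    omega
  exact ⟨key, fun h => key ⟨1, by rw [h]; norm_num⟩⟩
end

section
/- At the equilibrium strategy pair (a*, d*) of the Attacker-Defender game with equal endowments R, Attacker's expected payoff equals R and Defender's expected payoff equals R − l*: Π_A(a*,d*) = R and Π_D(a*,d*) = R − l*. -/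
/-- The `n`-th harmonic number `H_n = 1 + 1/2 + ... + 1/n` (with `H_0 = 0`). -/
noncomputable def H (n : ℕ) : ℝ := ∑ k ∈ Finset.Icc 1 n, (1 : ℝ) / k

/-- `l` is the upper bound `l*` for endowment `R`:
the unique `1 ≤ l ≤ R - 1` with `H_R - H_{R-l} < 1 < H_R - H_{R-l-1}`. -/
def IsUpperBound (R l : ℕ) : Prop :=
  1 ≤ l ∧ l ≤ R - 1 ∧ H R - H (R - l) < 1 ∧ 1 < H R - H (R - l - 1)

/-- Attacker's equilibrium mixed strategy (defender endowment `R`, upper bound `l`). -/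
noncomputable def astar (R l : ℕ) : ℕ → ℝ := fun i =>
  if i = 0 then ((R : ℝ) - l) / R
  else if i ≤ l then ((R : ℝ) - l) / (((R : ℝ) - i + 1) * ((R : ℝ) - i))
  else 0

/-- Defender's equilibrium mixed strategy (defender endowment `R`, upper bound `l`). -/
noncomputable def dstar (R l : ℕ) : ℕ → ℝ := fun j =>
  if j < l then 1 / ((R : ℝ) - j)
  else if j = l then 1 - ∑ k ∈ Finset.range l, 1 / ((R : ℝ) - k)
  else 0

/-- At equilibrium, Attacker's expected payoff is `R` and Defender's is `R - l*`. -/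
theorem equilibrium_expected_payoffs (R l : ℕ) (hR : 2 ≤ R) (hl : IsUpperBound R l) :
    PayA R R (astar R l) (dstar R l) = (R : ℝ) ∧
    PayD R R (astar R l) (dstar R l) = (R : ℝ) - l := by
  obtain ⟨hl1, hl2, -, -⟩ := hl
  have hlR : l < R := by omega
  have hne : ∀ j : ℕ, j < R → ((R:ℝ) - j) ≠ 0 := by
    intro j hj
    have : (j:ℝ) < R := by exact_mod_cast hj
    linarith
  -- partial sums of astar
  have hA : ∀ j, j ≤ l → ∑ i ∈ Finset.range (j+1), astar R l i = ((R:ℝ) - l)/((R:ℝ) - j) := by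
    intro j
    induction j with
    | zero => intro _; simp [astar]
    | succ j ih =>
      intro hj
      rw [Finset.sum_range_succ, ih (by omega)]
      have h1 : ((R:ℝ) - j) ≠ 0 := hne j (by omega)
      have h2 : ((R:ℝ) - j - 1) ≠ 0 := by
        have h := hne (j+1) (by omega)
        push_cast at h
        intro hc; apply h; linarith
      have ha : astar R l (j+1) = ((R:ℝ)-l)/(((R:ℝ)-j)*((R:ℝ)-j-1)) := by
        simp only [astar, Nat.succ_ne_zero, if_false, if_pos hj]
        push_cast
        rw [show ((R:ℝ)-((j:ℝ)+1)+1) = (R:ℝ)-j by ring,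
          show ((R:ℝ)-((j:ℝ)+1)) = (R:ℝ)-(j:ℝ)-1 by ring]
      rw [ha]
      push_cast
      rw [show ((R:ℝ)-((j:ℝ)+1)) = (R:ℝ)-(j:ℝ)-1 by ring]
      field_simp
      ring
  have hasum : ∑ i ∈ Finset.range (R+1), astar R l i = 1 := by
    rw [← Finset.sum_subset (Finset.range_subset_range.2 (by omega : l+1 ≤ R+1))
      (fun i _ hi => by
        have hi' : l < i := by simpa using hi
        simp only [astar]
        rw [if_neg (by omega), if_neg (by omega)]),
      hA l le_rfl, div_self (hne l hlR)]
  have hdsum : ∑ j ∈ Finset.range (R+1), dstar R l j = 1 := by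
    rw [← Finset.sum_subset (Finset.range_subset_range.2 (by omega : l+1 ≤ R+1))
      (fun j _ hj => by
        have hj' : l < j := by simpa using hj
        simp only [dstar]
        rw [if_neg (by omega), if_neg (by omega)]),
      Finset.sum_range_succ]
    have hdl : ∑ j ∈ Finset.range l, dstar R l j = ∑ j ∈ Finset.range l, 1/((R:ℝ)-j) :=
      Finset.sum_congr rfl fun j hj => by simp [dstar, Finset.mem_range.mp hj]
    rw [hdl]
    simp [dstar]
  -- attacker's pure payoff against dstar is R for i ≤ l
  have hAin : ∀ i, i ≤ l → ∑ j ∈ Finset.range (R+1), dstar R l j * piA R R i j = R := by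
    intro i hi
    have hterm : ∀ j, dstar R l j * piA R R i j
        = dstar R l j * ((R:ℝ) - i) + (if j < i then dstar R l j * ((R:ℝ) - j) else 0) := by
      intro j
      unfold piA
      by_cases h : j < i
      · rw [if_pos h, if_pos h]; ring
      · rw [if_neg h, if_neg h]; ring
    simp_rw [hterm]
    rw [Finset.sum_add_distrib, ← Finset.sum_mul, hdsum, one_mul]
    have h2 : ∑ j ∈ Finset.range (R+1), (if j < i then dstar R l j * ((R:ℝ) - j) else 0)
        = ∑ j ∈ Finset.range i, (if j < i then dstar R l j * ((R:ℝ) - j) else 0) := by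
      rw [← Finset.sum_subset (Finset.range_subset_range.2 (by omega : i ≤ R+1))
        (fun j _ hj => if_neg (by simpa using hj))]
    rw [h2]
    have h3 : ∀ j ∈ Finset.range i,
        (if j < i then dstar R l j * ((R:ℝ) - j) else 0) = 1 := by
      intro j hj
      have hji : j < i := Finset.mem_range.mp hj
      have hjl : j < l := by omega
      rw [if_pos hji]
      simp only [dstar, if_pos hjl]
      rw [one_div_mul_cancel (hne j (by omega))]
    rw [Finset.sum_congr rfl h3, Finset.sum_const, Nat.smul_one_eq_cast, Finset.card_range]
    ring
  -- defender's pure payoff against astar is R - l for j ≤ l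
  have hDin : ∀ j, j ≤ l → ∑ i ∈ Finset.range (R+1), astar R l i * piD R i j = (R:ℝ) - l := by
    intro j hj
    have hterm : ∀ i, astar R l i * piD R i j
        = (if i < j+1 then astar R l i * ((R:ℝ) - j) else 0) := by
      intro i
      unfold piD
      by_cases h : j < i
      · rw [if_pos h, if_neg (by omega)]; ring
      · rw [if_neg h, if_pos (by omega)]
    simp_rw [hterm]
    rw [← Finset.sum_subset (Finset.range_subset_range.2 (by omega : j+1 ≤ R+1))
        (fun i _ hi => if_neg (by simpa using hi)),
      Finset.sum_congr rfl (fun i hi => if_pos (Finset.mem_range.mp hi)),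
      ← Finset.sum_mul, hA j hj, div_mul_cancel₀ _ (hne j (by omega))]
  constructor
  · unfold PayA
    have hrow : ∀ i ∈ Finset.range (R+1),
        ∑ j ∈ Finset.range (R+1), astar R l i * dstar R l j * piA R R i j
          = astar R l i * (R:ℝ) := by
      intro i _
      by_cases hi : i ≤ l
      · rw [← hAin i hi, Finset.mul_sum]
        exact Finset.sum_congr rfl fun j _ => by ring
      · have h0 : astar R l i = 0 := by
          simp only [astar]; rw [if_neg (by omega), if_neg hi]
        simp [h0]
    rw [Finset.sum_congr rfl hrow, ← Finset.sum_mul, hasum, one_mul]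
  · unfold PayD
    rw [Finset.sum_comm]
    have hrow : ∀ j ∈ Finset.range (R+1),
        ∑ i ∈ Finset.range (R+1), astar R l i * dstar R l j * piD R i j
          = dstar R l j * ((R:ℝ) - l) := by
      intro j _
      by_cases hj : j ≤ l
      · rw [← hDin j hj, Finset.mul_sum]
        exact Finset.sum_congr rfl fun i _ => by ring
      · have h0 : dstar R l j = 0 := by
          simp only [dstar]; rw [if_neg (by omega), if_neg (by omega)]
        simp [h0]
    rw [Finset.sum_congr rfl hrow, ← Finset.sum_mul, hdsum, one_mul]
end

section
/- At the equilibrium strategy pair (a*, d*) of the Attacker-Defender game with equal endowments R, the sum of expected payoffs equals the total endowments less the upper bound: Π_A(a*,d*) + Π_D(a*,d*) = 2R − l*. -/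
/-!
Since `π_A(i, j) + π_D(i, j) = 2R - i - j` for every pair of investments, the sum of the expected
payoffs of any pair of mixed strategies is `2R - E_a[i] - E_d[j]`. For the equilibrium pair both
means are explicit: with `S = Σ_{j<l} 1/(R - j)` one finds `E_{d*}[j] = (R - l) S` directly, and
`E_{a*}[i] = l - (R - l) S` by telescoping, since `1/((R-i)(R-i-1)) = 1/(R-i-1) - 1/(R-i)`.
The two means add up to `l`.
-/

open Finset

lemma piA_add_piD (RA RD i j : ℕ) :
    piA RA RD i j + piD RD i j = (RA : ℝ) + RD - i - j := by
  unfold piA piD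
  split_ifs <;> ring

lemma payA_add_payD (RA RD : ℕ) (a d : ℕ → ℝ)
    (ha : ∑ i ∈ range (RA + 1), a i = 1) (hd : ∑ j ∈ range (RD + 1), d j = 1) :
    PayA RA RD a d + PayD RA RD a d
      = (RA : ℝ) + RD - ∑ i ∈ range (RA + 1), (i : ℝ) * a i
          - ∑ j ∈ range (RD + 1), (j : ℝ) * d j := by
  have hterm : ∀ i j : ℕ, a i * d j * piA RA RD i j + a i * d j * piD RD i j
      = ((RA : ℝ) + RD) * (a i * d j) - (i * a i) * d j - a i * (j * d j) := by
    intro i j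
    rw [← mul_add, piA_add_piD]
    ring
  unfold PayA PayD
  simp only [← sum_add_distrib, hterm, sum_sub_distrib, ← mul_sum, ← sum_mul, ha, hd]
  ring

section Equilibrium

variable {R l : ℕ}

lemma sum_mul_astar (hlR : l < R) (w : ℕ → ℝ) :
    ∑ i ∈ range (R + 1), w i * astar R l i
      = ∑ i ∈ range l, w (i + 1) * (((R : ℝ) - l) / (((R : ℝ) - i) * ((R : ℝ) - i - 1)))
        + w 0 * (((R : ℝ) - l) / R) := by
  rw [← sum_subset (range_subset_range.mpr (by omega : l + 1 ≤ R + 1)), sum_range_succ']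
  · congr 1
    refine sum_congr rfl fun i hi => ?_
    have hi : i < l := mem_range.mp hi
    simp only [astar, Nat.add_one_ne_zero, if_false, if_pos (by omega : i + 1 ≤ l)]
    push_cast
    ring
  · intro i hi hil
    simp only [mem_range] at hi hil
    simp [astar, if_neg (by omega : i ≠ 0), if_neg (by omega : ¬i ≤ l)]

lemma sum_mul_dstar (hlR : l < R) (w : ℕ → ℝ) :
    ∑ j ∈ range (R + 1), w j * dstar R l j
      = ∑ j ∈ range l, w j * (1 / ((R : ℝ) - j))
        + w l * (1 - ∑ k ∈ range l, 1 / ((R : ℝ) - k)) := by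
  rw [← sum_subset (range_subset_range.mpr (by omega : l + 1 ≤ R + 1)), sum_range_succ]
  · congr 1
    · exact sum_congr rfl fun j hj => by rw [dstar, if_pos (mem_range.mp hj)]
    · simp [dstar]
  · intro j hj hjl
    simp only [mem_range] at hj hjl
    simp [dstar, if_neg (by omega : ¬j < l), if_neg (by omega : j ≠ l)]

lemma sum_astar (hlR : l < R) : ∑ i ∈ range (R + 1), astar R l i = 1 := by
  have hstep : ∀ i ∈ range l, ((R : ℝ) - l) / (((R : ℝ) - i) * ((R : ℝ) - i - 1))
      = ((R : ℝ) - l) * (1 / ((R : ℝ) - ↑(i + 1)) - 1 / ((R : ℝ) - i)) := by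
    intro i hi
    have hi : i + 1 < R := by have := mem_range.mp hi; omega
    have h1 : (0 : ℝ) < R - (i + 1) := sub_pos.mpr (by exact_mod_cast hi)
    have h0 : (0 : ℝ) < R - i := by linarith
    push_cast
    rw [sub_sub]
    field_simp
    ring
  have hl0 : (R : ℝ) - l ≠ 0 := (sub_pos.mpr (Nat.cast_lt.mpr hlR)).ne'
  have hR0 : (R : ℝ) ≠ 0 := by exact_mod_cast (by omega : R ≠ 0)
  have := sum_mul_astar hlR (fun _ => 1)
  simp only [one_mul] at this
  rw [this, sum_congr rfl hstep, ← mul_sum, sum_range_sub (fun i : ℕ => 1 / ((R : ℝ) - i)) l,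
    Nat.cast_zero, sub_zero]
  field_simp
  ring

lemma sum_natCast_mul_astar (hlR : l < R) :
    ∑ i ∈ range (R + 1), (i : ℝ) * astar R l i
      = l - ((R : ℝ) - l) * ∑ k ∈ range l, 1 / ((R : ℝ) - k) := by
  have hstep : ∀ i ∈ range l,
      ((i + 1 : ℕ) : ℝ) * (((R : ℝ) - l) / (((R : ℝ) - i) * ((R : ℝ) - i - 1)))
        = ((R : ℝ) - l) * ((((i + 1 : ℕ) : ℝ) / ((R : ℝ) - ↑(i + 1)) - i / ((R : ℝ) - i))
            - 1 / ((R : ℝ) - i)) := by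
    intro i hi
    have hi : i + 1 < R := by have := mem_range.mp hi; omega
    have h1 : (0 : ℝ) < R - (i + 1) := sub_pos.mpr (by exact_mod_cast hi)
    have h0 : (0 : ℝ) < R - i := by linarith
    push_cast
    rw [sub_sub]
    field_simp
    ring
  have hl0 : (R : ℝ) - l ≠ 0 := (sub_pos.mpr (Nat.cast_lt.mpr hlR)).ne'
  rw [sum_mul_astar hlR, sum_congr rfl hstep, ← mul_sum, sum_sub_distrib,
    sum_range_sub (fun i : ℕ => (i : ℝ) / ((R : ℝ) - i)) l]
  field_simp
  ring

lemma sum_dstar (hlR : l < R) : ∑ j ∈ range (R + 1), dstar R l j = 1 := by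
  have := sum_mul_dstar hlR (fun _ => 1)
  simp only [one_mul] at this
  rw [this]
  ring

lemma sum_natCast_mul_dstar (hlR : l < R) :
    ∑ j ∈ range (R + 1), (j : ℝ) * dstar R l j
      = ((R : ℝ) - l) * ∑ k ∈ range l, 1 / ((R : ℝ) - k) := by
  have hstep : ∀ j ∈ range l, (j : ℝ) * (1 / ((R : ℝ) - j)) = R * (1 / ((R : ℝ) - j)) - 1 := by
    intro j hj
    have h0 : (0 : ℝ) < R - j := sub_pos.mpr (by exact_mod_cast (mem_range.mp hj).trans hlR)
    field_simp
    ring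
  rw [sum_mul_dstar hlR, sum_congr rfl hstep, sum_sub_distrib, ← mul_sum, sum_const, card_range,
    nsmul_one]
  ring

end Equilibrium

theorem sum_expected_payoffs_general (R l : ℕ) (hl : IsUpperBound R l) :
    PayA R R (astar R l) (dstar R l) + PayD R R (astar R l) (dstar R l)
      = 2 * (R : ℝ) - l := by
  have hlR : l < R := by
    obtain ⟨hl1, hle, -⟩ := hl
    omega
  rw [payA_add_payD R R _ _ (sum_astar hlR) (sum_dstar hlR), sum_natCast_mul_astar hlR,
    sum_natCast_mul_dstar hlR]
  ring

/-- At equilibrium, the sum of expected payoffs equals `2R - l*`. -/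
theorem sum_expected_payoffs (R l : ℕ) (hR : 2 ≤ R) (hl : IsUpperBound R l) :
    PayA R R (astar R l) (dstar R l) + PayD R R (astar R l) (dstar R l)
      = 2 * (R : ℝ) - l :=
  sum_expected_payoffs_general R l hl
end

section
/- At the equilibrium strategy pair (a*, d*) of the Attacker-Defender game with equal endowments R, the sum of expected conflict investments equals the upper bound: E(a*) + E(d*) = l*. -/
/-- Expected conflict investment of a mixed strategy on `{0, ..., R}`. -/
noncomputable def Einv (R : ℕ) (s : ℕ → ℝ) : ℝ := ∑ i ∈ Finset.range (R + 1), (i : ℝ) * s i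

/-! Both strategies are supported on `{0, …, l}`. Writing `S = ∑_{k<l} 1/(R-k)`, the defender's
expected investment is `∑_{k<l} k/(R-k) + l(1 - S) = (RS - l) + l(1 - S) = (R-l)S`, while the
attacker's weights `(R-l)/((R-i+1)(R-i))` split into partial fractions, so that `E(a*)` telescopes
to `l - (R-l)S`. The two contributions of `S` cancel. -/

open Finset

section ExpectedInvestment

variable {R : ℕ}

theorem Einv_eq_sum_range_of_eq_zero {s : ℕ → ℝ} {n : ℕ} (hnR : n ≤ R)
    (hs : ∀ i, n < i → s i = 0) :
    Einv R s = ∑ i ∈ range (n + 1), (i : ℝ) * s i := by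
  refine (sum_subset (range_subset_range.mpr (by omega)) fun i _ hi => ?_).symm
  rw [hs i (by simpa using hi), mul_zero]

theorem sum_range_cast_div_sub {l : ℕ} (hlR : l ≤ R) :
    ∑ k ∈ range l, (k : ℝ) / ((R : ℝ) - k) = R * ∑ k ∈ range l, 1 / ((R : ℝ) - k) - l := by
  have hterm : ∀ k ∈ range l, (k : ℝ) / ((R : ℝ) - k) = R * (1 / ((R : ℝ) - k)) - 1 := by
    intro k hk
    have hRk : (R : ℝ) - k ≠ 0 :=
      sub_ne_zero.mpr (by exact_mod_cast ((mem_range.mp hk).trans_le hlR).ne')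
    field_simp
    ring
  rw [sum_congr rfl hterm, sum_sub_distrib, ← mul_sum]
  simp

/-- Partial fractions: `(k+1)/((R-k)(R-k-1)) = f (k+1) - f k - 1/(R-k)` with `f k = k/(R-k)`. -/
theorem sum_range_succ_div_mul_sub {l : ℕ} (hlR : l < R) :
    ∑ k ∈ range l, ((k : ℝ) + 1) / (((R : ℝ) - k) * ((R : ℝ) - k - 1))
      = l / ((R : ℝ) - l) - ∑ k ∈ range l, 1 / ((R : ℝ) - k) := by
  have hterm : ∀ k ∈ range l, ((k : ℝ) + 1) / (((R : ℝ) - k) * ((R : ℝ) - k - 1))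
      = (((k + 1 : ℕ) : ℝ) / ((R : ℝ) - (k + 1 : ℕ)) - (k : ℝ) / ((R : ℝ) - k))
        - 1 / ((R : ℝ) - k) := by
    intro k hk
    have hkR : (k : ℝ) + 1 < R := by
      exact_mod_cast (Nat.succ_le_of_lt (mem_range.mp hk)).trans_lt hlR
    have hRk₁ : (R : ℝ) - k - 1 ≠ 0 := by linarith
    have hRk : (R : ℝ) - k ≠ 0 := by linarith
    push_cast
    rw [← sub_sub]
    field_simp
    ring
  rw [sum_congr rfl hterm, sum_sub_distrib, sum_range_sub (fun k => (k : ℝ) / ((R : ℝ) - k))]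
  simp

theorem Einv_astar {l : ℕ} (hlR : l < R) :
    Einv R (astar R l) = l - ((R : ℝ) - l) * ∑ k ∈ range l, 1 / ((R : ℝ) - k) := by
  have hsupp : ∀ i, l < i → astar R l i = 0 := fun i hi => by
    simp [astar, (l.zero_le.trans_lt hi).ne', hi.not_ge]
  have hRl : (R : ℝ) - l ≠ 0 := sub_ne_zero.mpr (by exact_mod_cast hlR.ne')
  calc Einv R (astar R l)
      = ((R : ℝ) - l) * ∑ k ∈ range l, ((k : ℝ) + 1) / (((R : ℝ) - k) * ((R : ℝ) - k - 1)) := by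
        rw [Einv_eq_sum_range_of_eq_zero hlR.le hsupp, sum_range_succ', mul_sum]
        simp only [astar, Nat.cast_zero, zero_mul, add_zero]
        refine sum_congr rfl fun k hk => ?_
        rw [if_neg k.succ_ne_zero, if_pos (Nat.succ_le_of_lt (mem_range.mp hk))]
        push_cast
        ring
    _ = ((R : ℝ) - l) * (l / ((R : ℝ) - l) - ∑ k ∈ range l, 1 / ((R : ℝ) - k)) := by
        rw [sum_range_succ_div_mul_sub hlR]
    _ = l - ((R : ℝ) - l) * ∑ k ∈ range l, 1 / ((R : ℝ) - k) := by
        field_simp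

theorem Einv_dstar {l : ℕ} (hlR : l ≤ R) :
    Einv R (dstar R l) = ((R : ℝ) - l) * ∑ k ∈ range l, 1 / ((R : ℝ) - k) := by
  have hsupp : ∀ j, l < j → dstar R l j = 0 := fun j hj => by
    simp [dstar, hj.ne', hj.not_gt]
  calc Einv R (dstar R l)
      = ∑ k ∈ range l, (k : ℝ) / ((R : ℝ) - k) + l * (1 - ∑ k ∈ range l, 1 / ((R : ℝ) - k)) := by
        rw [Einv_eq_sum_range_of_eq_zero hlR hsupp, sum_range_succ]
        simp only [dstar, lt_irrefl, if_false, if_true]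
        congr 1
        refine sum_congr rfl fun k hk => ?_
        rw [if_pos (mem_range.mp hk), mul_one_div]
    _ = ((R : ℝ) - l) * ∑ k ∈ range l, 1 / ((R : ℝ) - k) := by
        rw [sum_range_cast_div_sub hlR]
        ring

end ExpectedInvestment

theorem sum_expected_investments_general (R l : ℕ) (hl : IsUpperBound R l) :
    Einv R (astar R l) + Einv R (dstar R l) = (l : ℝ) := by
  obtain ⟨hl_pos, hlR, -, -⟩ := hl
  have hlR : l < R := by omega
  rw [Einv_astar hlR, Einv_dstar hlR.le]
  ring

/-- At equilibrium, the sum of expected conflict investments equals the upper bound `l*`. -/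
theorem sum_expected_investments (R l : ℕ) (hR : 2 ≤ R) (hl : IsUpperBound R l) :
    Einv R (astar R l) + Einv R (dstar R l) = (l : ℝ) :=
  sum_expected_investments_general R l hl
end

section
/- The ratio of the upper bound to the endowment converges to 1 − 1/e as the endowment goes to infinity: lim_{R→∞} l*(R)/R = 1 − 1/e. -/
/-!
Comparing `H` with `log` through the monotone Euler–Mascheroni sequences `H_n - log (n + 1)` and
`H_n - log n` turns the two defining inequalities of `l*` into `R + 1 < e (m + 1)` and
`e (m - 1) < R` for `m = R - l*`. Hence `|R - e m| < e`, i.e. `|l*/R - (1 - 1/e)| < 1/R`.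
-/

open Real Filter

lemma H_eq_harmonic (n : ℕ) : H n = harmonic n := by
  simp [H, harmonic_eq_sum_Icc]

lemma log_div_le_H_sub {m n : ℕ} (h : m ≤ n) :
    log ((n + 1) / (m + 1)) ≤ H n - H m := by
  have := strictMono_eulerMascheroniSeq.monotone h
  rw [eulerMascheroniSeq, eulerMascheroniSeq] at this
  rw [log_div (by positivity) (by positivity), H_eq_harmonic, H_eq_harmonic]
  linarith

lemma H_sub_le_log_div {m n : ℕ} (hm : m ≠ 0) (h : m ≤ n) :
    H n - H m ≤ log (n / m) := by
  have := strictAnti_eulerMascheroniSeq'.antitone h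
  rw [eulerMascheroniSeq', eulerMascheroniSeq', if_neg hm, if_neg (by omega)] at this
  rw [log_div (Nat.cast_ne_zero.2 (by omega)) (Nat.cast_ne_zero.2 hm), H_eq_harmonic, H_eq_harmonic]
  linarith

lemma lt_exp_one_mul_of_H_sub_lt_one {m n : ℕ} (h : m ≤ n) (hH : H n - H m < 1) :
    (n : ℝ) + 1 < exp 1 * (m + 1) := by
  by_contra! hle
  have : 1 ≤ log ((n + 1) / (m + 1)) :=
    (le_log_iff_exp_le (by positivity)).2 ((le_div_iff₀ (by positivity)).2 hle)
  linarith [log_div_le_H_sub h]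

lemma exp_one_mul_lt_of_one_lt_H_sub {m n : ℕ} (h : m ≤ n) (hH : 1 < H n - H m) :
    exp 1 * m < n := by
  rcases Nat.eq_zero_or_pos m with rfl | hm
  · have hn : n ≠ 0 := by rintro rfl; norm_num at hH
    simpa using Nat.pos_of_ne_zero hn
  by_contra! hle
  have hn : 0 < n := hm.trans_le h
  have : log (n / m) ≤ 1 :=
    (log_le_iff_le_exp (by positivity)).2 ((div_le_iff₀ (by positivity)).2 hle)
  linarith [H_sub_le_log_div hm.ne' h]

namespace IsUpperBound

variable {R l : ℕ}

lemma lt (h : IsUpperBound R l) : l < R := by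
  have := h.1
  have := h.2.1
  omega

lemma abs_sub_exp_one_mul_lt (h : IsUpperBound R l) :
    |(R : ℝ) - exp 1 * (R - l : ℕ)| < exp 1 := by
  obtain ⟨hl, hlR, hlt, hgt⟩ := h
  have hupper := lt_exp_one_mul_of_H_sub_lt_one (Nat.sub_le R l) hlt
  have hlower := exp_one_mul_lt_of_one_lt_H_sub (by omega) hgt
  rw [Nat.cast_sub (by omega : 1 ≤ R - l), Nat.cast_one] at hlower
  rw [abs_lt]
  constructor <;> nlinarith [exp_pos 1]

lemma abs_div_sub_lt (h : IsUpperBound R l) :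
    |(l : ℝ) / R - (1 - 1 / exp 1)| < 1 / R := by
  have hR : (0 : ℝ) < R := by exact_mod_cast (Nat.zero_le l).trans_lt h.lt
  have heR : 0 < exp 1 * R := mul_pos (exp_pos 1) hR
  calc |(l : ℝ) / R - (1 - 1 / exp 1)| = |(R : ℝ) - exp 1 * (R - l : ℕ)| / (exp 1 * R) := by
        rw [Nat.cast_sub h.lt.le, ← abs_of_pos heR, ← abs_div]
        congr 1
        field_simp
        ring
    _ < exp 1 / (exp 1 * R) := by gcongr; exact h.abs_sub_exp_one_mul_lt
    _ = 1 / R := by field_simp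

end IsUpperBound

/-- The ratio of the upper bound to the endowment converges to `1 - 1/e`. -/
theorem upper_bound_ratio_tendsto (L : ℕ → ℕ) (hL : ∀ R, 2 ≤ R → IsUpperBound R (L R)) :
    Filter.Tendsto (fun R : ℕ => (L R : ℝ) / R) Filter.atTop
      (nhds (1 - 1 / Real.exp 1)) := by
  rw [tendsto_iff_norm_sub_tendsto_zero]
  refine squeeze_zero' (.of_forall fun _ => norm_nonneg _) ?_ tendsto_one_div_atTop_nhds_zero_nat
  filter_upwards [eventually_ge_atTop 2] with R hR
  exact (hL R hR).abs_div_sub_lt.le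
end

section
/- For every integer R ≥ 2, the upper bound l*(R) satisfies the two-sided estimate (l*(R) − 1)/R < 1 − 1/e < (l*(R) + 2)/(R + 1). -/
open Real Finset

lemma H_eq_sum_range (n : ℕ) : H n = ∑ k ∈ range n, 1 / ((k : ℝ) + 1) := by
  have := sum_Ico_add' (fun k : ℕ ↦ 1 / (k : ℝ)) 0 n 1
  rw [zero_add, Ico_add_one_right_eq_Icc] at this
  rw [H, ← this, range_eq_Ico]
  push_cast
  rfl

lemma H_sub_H_eq_sum_Ico {m n : ℕ} (h : m ≤ n) :
    H n - H m = ∑ k ∈ Ico m n, 1 / ((k : ℝ) + 1) := by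
  rw [H_eq_sum_range, H_eq_sum_range, sum_Ico_eq_sub _ h]

lemma one_div_add_one_le_log_add_one_sub_log {x : ℝ} (hx : 0 < x) :
    1 / (x + 1) ≤ log (x + 1) - log x := by
  have := one_sub_inv_le_log_of_pos (x := (x + 1) / x) (by positivity)
  rw [log_div (by positivity) hx.ne', inv_div] at this
  field_simp at this ⊢
  linarith

lemma log_add_one_sub_log_le_one_div {x : ℝ} (hx : 0 < x) :
    log (x + 1) - log x ≤ 1 / x := by
  have := log_le_sub_one_of_pos (x := (x + 1) / x) (by positivity)
  rw [log_div (by positivity) hx.ne'] at this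
  field_simp at this ⊢
  linarith

lemma log_add_one_sub_log_add_one_le_H_sub_H {m n : ℕ} (h : m ≤ n) :
    log ((n : ℝ) + 1) - log ((m : ℝ) + 1) ≤ H n - H m := by
  rw [H_sub_H_eq_sum_Ico h, ← sum_Ico_sub (fun k : ℕ ↦ log ((k : ℝ) + 1)) h]
  refine sum_le_sum fun k _ ↦ ?_
  push_cast
  exact log_add_one_sub_log_le_one_div (by positivity)

lemma H_sub_H_le_log_sub_log {m n : ℕ} (hm : 0 < m) (h : m ≤ n) :
    H n - H m ≤ log n - log m := by
  rw [H_sub_H_eq_sum_Ico h, ← sum_Ico_sub (fun k : ℕ ↦ log (k : ℝ)) h]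
  refine sum_le_sum fun k hk ↦ ?_
  push_cast
  exact one_div_add_one_le_log_add_one_sub_log (Nat.cast_pos.2 (hm.trans_le (mem_Ico.1 hk).1))

lemma lt_exp_one_mul_of_H_sub_H_lt_one {m n : ℕ} (h : m ≤ n) (hlt : H n - H m < 1) :
    (n : ℝ) + 1 < exp 1 * ((m : ℝ) + 1) := by
  have hlog : log (((n : ℝ) + 1) / ((m : ℝ) + 1)) < 1 := by
    rw [log_div (by positivity) (by positivity)]
    linarith [log_add_one_sub_log_add_one_le_H_sub_H h]
  rw [log_lt_iff_lt_exp (by positivity), div_lt_iff₀ (by positivity)] at hlog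
  linarith

lemma exp_one_mul_lt_of_one_lt_H_sub_H {m n : ℕ} (h : m ≤ n) (hgt : 1 < H n - H m) :
    exp 1 * m < n := by
  rcases Nat.eq_zero_or_pos m with rfl | hm
  · have : n ≠ 0 := by rintro rfl; norm_num at hgt
    simpa using Nat.pos_of_ne_zero this
  have hm' : (0 : ℝ) < m := Nat.cast_pos.2 hm
  have hn' : (0 : ℝ) < n := hm'.trans_le (Nat.cast_le.2 h)
  have hlog : 1 < log ((n : ℝ) / m) := by
    rw [log_div hn'.ne' hm'.ne']
    linarith [H_sub_H_le_log_sub_log hm h]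
  rwa [lt_log_iff_exp_lt (div_pos hn' hm'), lt_div_iff₀ hm'] at hlog

theorem upper_bound_two_sided_estimate_general (R l : ℕ) (hl : IsUpperBound R l) :
    ((l : ℝ) - 1) / R < 1 - 1 / Real.exp 1 ∧
    1 - 1 / Real.exp 1 < ((l : ℝ) + 2) / ((R : ℝ) + 1) := by
  obtain ⟨hl1, hlR, hlt, hgt⟩ := hl
  have hlow := lt_exp_one_mul_of_H_sub_H_lt_one (Nat.sub_le R l) hlt
  have hupp := exp_one_mul_lt_of_one_lt_H_sub_H (by omega) hgt
  rw [Nat.cast_sub (by omega)] at hlow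
  rw [Nat.sub_sub, Nat.cast_sub (by omega)] at hupp
  push_cast at hupp
  have hR : (0 : ℝ) < R := by exact_mod_cast (by omega : 0 < R)
  have he := exp_pos 1
  rw [one_sub_div he.ne']
  constructor
  · rw [div_lt_div_iff₀ hR he]
    linarith
  · rw [div_lt_div_iff₀ he (by positivity)]
    linarith

/-- The two-sided estimate `(l* - 1)/R < 1 - 1/e < (l* + 2)/(R + 1)`. -/
theorem upper_bound_two_sided_estimate (R l : ℕ) (hR : 2 ≤ R) (hl : IsUpperBound R l) :
    ((l : ℝ) - 1) / R < 1 - 1 / Real.exp 1 ∧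
    1 - 1 / Real.exp 1 < ((l : ℝ) + 2) / ((R : ℝ) + 1) :=
  upper_bound_two_sided_estimate_general R l hl
end
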